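/- arXiv:1006.1865 — 3 statements merged into one kernel-verified Lean document; each statement's English description precedes it below -/
import Mathlib

section
/- For any partition λ of n, the hook-length formula holds: f^λ = n! / ∏_{z ∈ [λ]} h_z, where h_{(i,j)} = λ_i + λ'_j − i − j + 1 is the hook length of the square (i,j). -/
open Finset

/-- The Young diagram of a partition given by row lengths `f 1, f 2, …` (rows beyond `L` empty). -/
def cells (f : ℕ → ℕ) (L : ℕ) : Finset (ℕ × ℕ) :=
  (Finset.Icc 1 L ×ˢ Finset.Icc 1 (f 1)).filter fun p => p.2 ≤ f p.1

/-- The `j`-th column length (the conjugate partition). -/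
def conj (f : ℕ → ℕ) (L j : ℕ) : ℕ :=
  ((Finset.Icc 1 L).filter fun i => j ≤ f i).card

/-- Hook length of the square `(i,j)`. -/
def hook (f : ℕ → ℕ) (L i j : ℕ) : ℕ :=
  (f i - j) + (conj f L j - i) + 1

/-- Corners of the diagram: squares whose removal leaves a diagram. -/
def corners (f : ℕ → ℕ) (L : ℕ) : Finset (ℕ × ℕ) :=
  (cells f L).filter fun p => p.2 = f p.1 ∧ f (p.1 + 1) < p.2

/-- Outer corners: squares outside the diagram whose addition gives a diagram. -/
def outerCorners (f : ℕ → ℕ) (L : ℕ) : Finset (ℕ × ℕ) :=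
  ((Finset.Icc 1 (L + 1)) ×ˢ (Finset.Icc 1 (f 1 + 1))).filter
    fun p => p.2 = f p.1 + 1 ∧ (p.1 = 1 ∨ p.2 ≤ f (p.1 - 1))

/-- `f` encodes a partition: weakly decreasing rows, vanishing beyond `L`. -/
def IsPartitionFun (f : ℕ → ℕ) (L : ℕ) : Prop :=
  (∀ i, 1 ≤ i → f (i + 1) ≤ f i) ∧ (∀ i, L < i → f i = 0)

/-- The number of standard Young tableaux of the given shape. -/
noncomputable def sytCard (f : ℕ → ℕ) (L : ℕ) : ℕ :=
  Nat.card {T : ℕ × ℕ → ℕ //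
    Set.BijOn T (cells f L) (Finset.Icc 1 (cells f L).card) ∧
    (∀ p ∈ cells f L, ∀ q ∈ cells f L, p.1 ≤ q.1 → p.2 ≤ q.2 → p ≠ q → T p < T q) ∧
    ∀ p, p ∉ cells f L → T p = 0}

/-- Remove a cell from the end of row `r`. -/
def removeCell (f : ℕ → ℕ) (r : ℕ) : ℕ → ℕ := fun i => if i = r then f i - 1 else f i

/-- Add a cell at the end of row `r`. -/
def addCell (f : ℕ → ℕ) (r : ℕ) : ℕ → ℕ := fun i => if i = r then f i + 1 else f i


namespace HookAux

open Finset Polynomial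

variable {f : ℕ → ℕ} {L : ℕ}

theorem mono (hf : IsPartitionFun f L) {i i' : ℕ} (h1 : 1 ≤ i) (h2 : i ≤ i') :
    f i' ≤ f i := by
  induction i', h2 using Nat.le_induction with
  | base => exact le_rfl
  | succ n hn ih => exact le_trans (hf.1 n (le_trans h1 hn)) ih

theorem mem_cells (hf : IsPartitionFun f L) {p : ℕ × ℕ} :
    p ∈ cells f L ↔ 1 ≤ p.1 ∧ 1 ≤ p.2 ∧ p.2 ≤ f p.1 := by
  simp only [cells, Finset.mem_filter, Finset.mem_product, Finset.mem_Icc]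
  constructor
  · rintro ⟨⟨⟨h1, h2⟩, h3, h4⟩, h5⟩
    exact ⟨h1, h3, h5⟩
  · rintro ⟨h1, h2, h3⟩
    have hL : p.1 ≤ L := by
      by_contra h
      have := hf.2 p.1 (by omega)
      omega
    exact ⟨⟨⟨h1, hL⟩, h2, le_trans h3 (mono hf le_rfl h1)⟩, h3⟩

theorem conj_le (j : ℕ) : conj f L j ≤ L := by
  have := Finset.card_filter_le (Finset.Icc 1 L) (fun i => j ≤ f i)
  simpa [conj, Nat.card_Icc] using this

theorem le_conj_iff (hf : IsPartitionFun f L) {i j : ℕ} (hi1 : 1 ≤ i) (hiL : i ≤ L) :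
    i ≤ conj f L j ↔ j ≤ f i := by
  constructor
  · intro h
    by_contra hj
    push_neg at hj
    have hsub : (Finset.Icc 1 L).filter (fun i' => j ≤ f i') ⊆ Finset.Icc 1 (i - 1) := by
      intro x hx
      simp only [Finset.mem_filter, Finset.mem_Icc] at hx ⊢
      refine ⟨hx.1.1, ?_⟩
      by_contra hxi
      have : f x ≤ f i := mono hf hi1 (by omega)
      omega
    have := Finset.card_le_card hsub
    simp only [Nat.card_Icc] at this
    unfold conj at h
    omega
  · intro hj
    have hsub : Finset.Icc 1 i ⊆ (Finset.Icc 1 L).filter (fun i' => j ≤ f i') := by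
      intro x hx
      simp only [Finset.mem_Icc] at hx
      simp only [Finset.mem_filter, Finset.mem_Icc]
      exact ⟨⟨hx.1, le_trans hx.2 hiL⟩, le_trans hj (mono hf hx.1 hx.2)⟩
    have := Finset.card_le_card hsub
    simpa [conj, Nat.card_Icc] using this

theorem conj_antitone {j j' : ℕ} (h : j ≤ j') : conj f L j' ≤ conj f L j := by
  apply Finset.card_le_card
  intro x hx
  simp only [Finset.mem_filter] at hx ⊢
  exact ⟨hx.1, le_trans h hx.2⟩

theorem hook_pos (i j : ℕ) : 1 ≤ hook f L i j := by
  unfold hook; omega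

/-- The row embedding. -/
def rowEmb (i : ℕ) : ℕ ↪ ℕ × ℕ :=
  ⟨fun j => (i, j), fun a b h => congrArg Prod.snd h⟩

theorem cells_eq_biUnion (hf : IsPartitionFun f L) :
    cells f L = (Finset.Icc 1 L).biUnion (fun i => (Finset.Icc 1 (f i)).map (rowEmb i)) := by
  ext p
  simp only [mem_cells hf, Finset.mem_biUnion, Finset.mem_map, Finset.mem_Icc, rowEmb,
    Function.Embedding.coeFn_mk]
  constructor
  · rintro ⟨h1, h2, h3⟩
    have hL : p.1 ≤ L := by
      by_contra hcon
      have := hf.2 p.1 (by omega)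
      omega
    exact ⟨p.1, ⟨h1, hL⟩, p.2, ⟨h2, h3⟩, rfl⟩
  · rintro ⟨i, ⟨hi1, hiL⟩, j, ⟨hj1, hj2⟩, rfl⟩
    exact ⟨hi1, hj1, hj2⟩

theorem pairwise_disjoint_rows :
    (↑(Finset.Icc 1 L) : Set ℕ).PairwiseDisjoint
      (fun i => (Finset.Icc 1 (f i)).map (rowEmb i)) := by
  intro a _ b _ hab
  simp only [Function.onFun, Finset.disjoint_left]
  intro p hp hq
  simp only [Finset.mem_map, rowEmb, Function.Embedding.coeFn_mk] at hp hq
  obtain ⟨x, _, rfl⟩ := hp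
  obtain ⟨y, _, h⟩ := hq
  exact hab (congrArg Prod.fst h).symm

theorem prod_cells (hf : IsPartitionFun f L) {M : Type*} [CommMonoid M] (g : ℕ → ℕ → M) :
    ∏ z ∈ cells f L, g z.1 z.2 = ∏ i ∈ Finset.Icc 1 L, ∏ j ∈ Finset.Icc 1 (f i), g i j := by
  rw [cells_eq_biUnion hf, Finset.prod_biUnion pairwise_disjoint_rows]
  refine Finset.prod_congr rfl fun i _ => ?_
  rw [Finset.prod_map]
  rfl

theorem card_cells (hf : IsPartitionFun f L) :
    (cells f L).card = ∑ i ∈ Finset.Icc 1 L, f i := by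
  rw [cells_eq_biUnion hf, Finset.card_biUnion (fun a ha b hb hab =>
    pairwise_disjoint_rows (f := f) ha hb hab)]
  simp [Nat.card_Icc]


/-- `ℓ_i = λ_i + L - i`. -/
def ell (f : ℕ → ℕ) (L i : ℕ) : ℕ := f i + (L - i)

theorem ell_strict (hf : IsPartitionFun f L) {i i' : ℕ} (h1 : 1 ≤ i) (h2 : i < i')
    (h3 : i' ≤ L) : ell f L i' < ell f L i := by
  have := mono hf h1 (le_of_lt h2)
  unfold ell
  omega

theorem hook_le_ell (hf : IsPartitionFun f L) {i j : ℕ} (hi1 : 1 ≤ i) (hiL : i ≤ L)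
    (hj1 : 1 ≤ j) (hj2 : j ≤ f i) : hook f L i j ≤ ell f L i := by
  have hc1 : i ≤ conj f L j := (le_conj_iff hf hi1 hiL).mpr hj2
  have hc2 : conj f L j ≤ L := conj_le j
  unfold hook ell
  omega

theorem hook_lt_hook (hf : IsPartitionFun f L) {i j j' : ℕ} (hi1 : 1 ≤ i) (hiL : i ≤ L)
    (hj1 : 1 ≤ j) (hlt : j < j') (hj2 : j' ≤ f i) : hook f L i j' < hook f L i j := by
  have h1 : conj f L j' ≤ conj f L j := conj_antitone (le_of_lt hlt)
  have h2 : i ≤ conj f L j' := (le_conj_iff hf hi1 hiL).mpr hj2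
  unfold hook
  omega

theorem hook_injOn (hf : IsPartitionFun f L) {i : ℕ} (hi1 : 1 ≤ i) (hiL : i ≤ L) :
    Set.InjOn (hook f L i) (Finset.Icc 1 (f i)) := by
  intro a ha b hb hab
  simp only [Finset.coe_Icc, Set.mem_Icc] at ha hb
  rcases lt_trichotomy a b with h | h | h
  · have := hook_lt_hook hf hi1 hiL ha.1 h hb.2
    omega
  · exact h
  · have := hook_lt_hook hf hi1 hiL hb.1 h ha.2
    omega

theorem diff_injOn (hf : IsPartitionFun f L) {i : ℕ} (hi1 : 1 ≤ i) :
    Set.InjOn (fun i' => ell f L i - ell f L i') (Finset.Icc (i + 1) L) := by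
  intro a ha b hb hab
  simp only [Finset.coe_Icc, Set.mem_Icc] at ha hb
  have hia : ell f L a < ell f L i := ell_strict hf hi1 (by omega) ha.2
  have hib : ell f L b < ell f L i := ell_strict hf hi1 (by omega) hb.2
  rcases lt_trichotomy a b with h | h | h
  · have := ell_strict hf (by omega : 1 ≤ a) h hb.2
    simp only at hab; omega
  · exact h
  · have := ell_strict hf (by omega : 1 ≤ b) h ha.2
    simp only at hab; omega

theorem hook_ne_diff (hf : IsPartitionFun f L) {i j i' : ℕ} (hi1 : 1 ≤ i)
    (hj1 : 1 ≤ j) (hj2 : j ≤ f i) (hi'1 : i < i') (hi'2 : i' ≤ L) :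
    hook f L i j ≠ ell f L i - ell f L i' := by
  have hm : f i' ≤ f i := mono hf hi1 (le_of_lt hi'1)
  have hc2 : conj f L j ≤ L := conj_le j
  have hc1 : i ≤ conj f L j := (le_conj_iff hf hi1 (by omega)).mpr hj2
  by_cases hcase : j ≤ f i'
  · have h1 : i' ≤ conj f L j := (le_conj_iff hf (by omega) hi'2).mpr hcase
    unfold hook ell
    omega
  · have h1 : ¬ i' ≤ conj f L j := fun h => hcase ((le_conj_iff hf (by omega) hi'2).mp h)
    unfold hook ell
    omega

theorem row_union (hf : IsPartitionFun f L) {i : ℕ} (hi1 : 1 ≤ i) (hiL : i ≤ L) :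
    ((Finset.Icc 1 (f i)).image (hook f L i)) ∪
      ((Finset.Icc (i + 1) L).image (fun i' => ell f L i - ell f L i'))
      = Finset.Icc 1 (ell f L i) := by
  have hdisj : Disjoint ((Finset.Icc 1 (f i)).image (hook f L i))
      ((Finset.Icc (i + 1) L).image (fun i' => ell f L i - ell f L i')) := by
    rw [Finset.disjoint_left]
    intro a ha hb
    simp only [Finset.mem_image, Finset.mem_Icc] at ha hb
    obtain ⟨j, hj, rfl⟩ := ha
    obtain ⟨i', hi', h⟩ := hb
    exact hook_ne_diff hf hi1 hj.1 hj.2 (by omega) hi'.2 h.symm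
  apply Finset.eq_of_subset_of_card_le
  · intro x hx
    simp only [Finset.mem_union, Finset.mem_image, Finset.mem_Icc] at hx
    rcases hx with ⟨j, hj, rfl⟩ | ⟨i', hi', rfl⟩
    · exact Finset.mem_Icc.mpr ⟨hook_pos _ _, hook_le_ell hf hi1 hiL hj.1 hj.2⟩
    · have := ell_strict hf hi1 (by omega : i < i') hi'.2
      exact Finset.mem_Icc.mpr ⟨by omega, by omega⟩
  · rw [Finset.card_union_of_disjoint hdisj,
      Finset.card_image_of_injOn (hook_injOn hf hi1 hiL),
      Finset.card_image_of_injOn (diff_injOn hf hi1)]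
    simp only [Nat.card_Icc, ell]
    omega

theorem prod_Icc_id_factorial (m : ℕ) : ∏ x ∈ Finset.Icc 1 m, x = m.factorial := by
  induction m with
  | zero => simp
  | succ n ih =>
    rw [Finset.prod_Icc_succ_top (by omega), ih, Nat.factorial_succ, mul_comm]

theorem row_factorial (hf : IsPartitionFun f L) {i : ℕ} (hi1 : 1 ≤ i) (hiL : i ≤ L) :
    (∏ j ∈ Finset.Icc 1 (f i), hook f L i j) *
      (∏ i' ∈ Finset.Icc (i + 1) L, (ell f L i - ell f L i'))
      = (ell f L i).factorial := by
  have hdisj : Disjoint ((Finset.Icc 1 (f i)).image (hook f L i))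
      ((Finset.Icc (i + 1) L).image (fun i' => ell f L i - ell f L i')) := by
    rw [Finset.disjoint_left]
    intro a ha hb
    simp only [Finset.mem_image, Finset.mem_Icc] at ha hb
    obtain ⟨j, hj, rfl⟩ := ha
    obtain ⟨i', hi', h⟩ := hb
    exact hook_ne_diff hf hi1 hj.1 hj.2 (by omega) hi'.2 h.symm
  have h1 := Finset.prod_union (f := id) hdisj
  simp only [id] at h1
  rw [Finset.prod_image (hook_injOn hf hi1 hiL), Finset.prod_image (diff_injOn hf hi1),
    row_union hf hi1 hiL] at h1
  rw [← h1]
  exact prod_Icc_id_factorial (ell f L i)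


/-! ### The rational-function identity via Lagrange interpolation -/

/-- Auxiliary polynomial. -/
noncomputable def NP (S : Finset ℚ) : Polynomial ℚ :=
  X * ∏ y ∈ S, (X - C (y + 1)) - (X - C (S.card : ℚ)) * ∏ y ∈ S, (X - C y)

theorem NP_empty : NP ∅ = 0 := by
  simp [NP]

theorem P0_monic (S : Finset ℚ) : (∏ y ∈ S, (X - C y)).Monic :=
  monic_prod_of_monic S _ fun y _ => monic_X_sub_C y

theorem P0_natDegree (S : Finset ℚ) : (∏ y ∈ S, (X - C y)).natDegree = S.card := by
  rw [natDegree_prod_of_monic _ _ fun y _ => monic_X_sub_C y]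
  simp [natDegree_X_sub_C]

theorem P0_degree (S : Finset ℚ) : (∏ y ∈ S, (X - C y)).degree = (S.card : WithBot ℕ) := by
  rw [degree_eq_natDegree (P0_monic S).ne_zero, P0_natDegree]

theorem NP_deg_coeff (S : Finset ℚ) :
    (NP S).degree < (S.card : WithBot ℕ) ∧
      (NP S).coeff (S.card - 1)
        = (S.card : ℚ) * ((S.card : ℚ) - 1) / 2 - ∑ x ∈ S, x := by
  classical
  induction S using Finset.induction_on with
  | empty => simp [NP_empty]
  | @insert a S ha ih =>
    obtain ⟨ihdeg, ihcoeff⟩ := ih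
    have hcard : (insert a S).card = S.card + 1 := Finset.card_insert_of_notMem ha
    have hrec : NP (insert a S)
        = (X - C (a + 1)) * NP S + C ((S.card : ℚ) - a) * ∏ y ∈ S, (X - C y) := by
      unfold NP
      rw [hcard, Finset.prod_insert ha, Finset.prod_insert ha]
      push_cast
      simp only [C_add, C_sub, C_1]
      ring
    have hdeg2 : (C ((S.card : ℚ) - a) * ∏ y ∈ S, (X - C y)).degree
        < ((S.card + 1 : ℕ) : WithBot ℕ) := by
      refine lt_of_le_of_lt (degree_mul_le _ _) ?_
      refine lt_of_le_of_lt (add_le_add degree_C_le le_rfl) ?_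
      rw [zero_add, P0_degree]
      exact_mod_cast WithBot.coe_lt_coe.mpr (Nat.lt_succ_self _)
    have hdeg1 : ((X - C (a + 1)) * NP S).degree < ((S.card + 1 : ℕ) : WithBot ℕ) := by
      rw [degree_mul, degree_X_sub_C]
      calc (1 : WithBot ℕ) + (NP S).degree < 1 + (S.card : WithBot ℕ) :=
            WithBot.add_lt_add_left (by simp) ihdeg
        _ = ((S.card + 1 : ℕ) : WithBot ℕ) := by
            push_cast
            rw [add_comm]
    constructor
    · rw [hrec, hcard]
      exact lt_of_le_of_lt (degree_add_le _ _) (max_lt hdeg1 hdeg2)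
    · rw [hrec, hcard]
      rcases Nat.eq_zero_or_pos S.card with hk | hk
      · have hS : S = ∅ := Finset.card_eq_zero.mp hk
        subst hS
        simp [NP_empty]
      · obtain ⟨m, hm⟩ : ∃ m, S.card = m + 1 := ⟨S.card - 1, by omega⟩
        have hc0 : (NP S).coeff (S.card) = 0 :=
          coeff_eq_zero_of_degree_lt ihdeg
        have hcoeffP0 : (∏ y ∈ S, (X - C y)).coeff S.card = 1 := by
          have := (P0_monic S).coeff_natDegree
          rwa [P0_natDegree] at this
        rw [coeff_add, sub_mul, coeff_sub, coeff_C_mul, coeff_C_mul]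
        simp only [Nat.add_sub_cancel]
        rw [hcoeffP0]
        rw [hm, coeff_X_mul]
        rw [← hm, hc0, mul_zero, sub_zero]
        rw [show S.card - 1 = m by omega] at ihcoeff
        rw [hm] at ihcoeff ⊢
        rw [ihcoeff, Finset.sum_insert ha]
        push_cast
        ring

theorem NP_eval (S : Finset ℚ) {x : ℚ} (hx : x ∈ S) :
    (NP S).eval x = -(x * ∏ y ∈ S.erase x, (x - y - 1)) := by
  unfold NP
  have h0 : (∏ y ∈ S, (X - C y)).eval x = 0 := by
    rw [eval_prod]
    apply Finset.prod_eq_zero hx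
    simp
  rw [eval_sub, eval_mul, eval_mul, h0, mul_zero, sub_zero, eval_X, eval_prod]
  have heq : ∀ y ∈ S, (X - C (y + 1)).eval x = x - y - 1 := by
    intro y _
    simp only [eval_sub, eval_X, eval_C]
    ring
  rw [Finset.prod_congr rfl heq, ← Finset.mul_prod_erase S _ hx]
  have hxx : x - x - 1 = -1 := by ring
  rw [hxx]
  ring

theorem basis_coeff (S : Finset ℚ) {x : ℚ} (hx : x ∈ S) :
    (Lagrange.basis S id x).coeff (S.card - 1) = (∏ y ∈ S.erase x, (x - y))⁻¹ := by
  unfold Lagrange.basis Lagrange.basisDivisor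
  simp only [id]
  rw [Finset.prod_mul_distrib, ← map_prod (C : ℚ →+* Polynomial ℚ), coeff_C_mul]
  have h1 : (∏ y ∈ S.erase x, (X - C y)).coeff (S.card - 1) = 1 := by
    have h2 := (P0_monic (S.erase x)).coeff_natDegree
    rw [P0_natDegree, Finset.card_erase_of_mem hx] at h2
    exact h2
  rw [h1, mul_one, ← Finset.prod_inv_distrib]

theorem key_identity (S : Finset ℚ) :
    ∑ x ∈ S, x * ∏ y ∈ S.erase x, ((x - y - 1) / (x - y))
      = (∑ x ∈ S, x) - (S.card : ℚ) * ((S.card : ℚ) - 1) / 2 := by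
  classical
  obtain ⟨hdeg, hcoeff⟩ := NP_deg_coeff S
  have hinterp := Lagrange.eq_interpolate (f := NP S) (Set.injOn_id _) hdeg
  have hco := congrArg (fun p => Polynomial.coeff p (S.card - 1)) hinterp
  simp only [Lagrange.interpolate_apply] at hco
  rw [Polynomial.finset_sum_coeff] at hco
  have hco2 : ∑ i ∈ S, (NP S).eval i * (∏ y ∈ S.erase i, (i - y))⁻¹
      = (S.card : ℚ) * ((S.card : ℚ) - 1) / 2 - ∑ x ∈ S, x := by
    rw [← hcoeff, hco]
    refine Finset.sum_congr rfl fun i hi => ?_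
    rw [coeff_C_mul, basis_coeff S hi]
    simp only [id]
  have hfinal : ∀ i ∈ S, (NP S).eval i * (∏ y ∈ S.erase i, (i - y))⁻¹
      = -(i * ∏ y ∈ S.erase i, ((i - y - 1) / (i - y))) := by
    intro i hi
    rw [NP_eval S hi, Finset.prod_div_distrib]
    field_simp
  rw [Finset.sum_congr rfl hfinal, Finset.sum_neg_distrib] at hco2
  linarith [hco2]


/-! ### The corner recurrence for `sytCard` -/

/-- The SYT predicate. -/
def IsSYT (f : ℕ → ℕ) (L : ℕ) (T : ℕ × ℕ → ℕ) : Prop :=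
  Set.BijOn T (cells f L) (Finset.Icc 1 (cells f L).card) ∧
    (∀ p ∈ cells f L, ∀ q ∈ cells f L, p.1 ≤ q.1 → p.2 ≤ q.2 → p ≠ q → T p < T q) ∧
    ∀ p, p ∉ cells f L → T p = 0

theorem sytCard_def (f : ℕ → ℕ) (L : ℕ) :
    sytCard f L = Nat.card {T : ℕ × ℕ → ℕ // IsSYT f L T} := rfl

theorem syt_finite (f : ℕ → ℕ) (L : ℕ) : Finite {T : ℕ × ℕ → ℕ // IsSYT f L T} := by
  classical
  set n := (cells f L).card
  refine Finite.of_injective (β := (↥(cells f L) → Fin (n + 1)))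
    (fun T p => ⟨T.1 p.1, by
      have h := T.2.1.mapsTo (Finset.mem_coe.mpr p.2)
      simp only [Finset.coe_Icc, Set.mem_Icc] at h
      omega⟩) ?_
  intro T S h
  apply Subtype.ext
  funext q
  by_cases hq : q ∈ cells f L
  · exact congrArg Fin.val (congrFun h ⟨q, hq⟩)
  · rw [T.2.2.2 q hq, S.2.2.2 q hq]

theorem mem_corners {p : ℕ × ℕ} :
    p ∈ corners f L ↔ p ∈ cells f L ∧ p.2 = f p.1 ∧ f (p.1 + 1) < p.2 := by
  simp [corners, Finset.mem_filter]

theorem corner_facts (hf : IsPartitionFun f L) {r c : ℕ} (hc : (r, c) ∈ corners f L) :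
    1 ≤ r ∧ r ≤ L ∧ c = f r ∧ 1 ≤ c ∧ f (r + 1) < c := by
  obtain ⟨hcell, h1, h2⟩ := mem_corners.mp hc
  rw [mem_cells hf] at hcell
  simp only at h1 h2 hcell
  have hL : r ≤ L := by
    by_contra h
    have := hf.2 r (by omega)
    omega
  exact ⟨hcell.1, hL, h1, hcell.2.1, h2⟩

theorem removeCell_isPartitionFun (hf : IsPartitionFun f L) {r c : ℕ}
    (hc : (r, c) ∈ corners f L) : IsPartitionFun (removeCell f r) L := by
  obtain ⟨hr1, hrL, hcf, hc1, hlt⟩ := corner_facts hf hc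
  constructor
  · intro i hi
    unfold removeCell
    by_cases h1 : i = r
    · subst h1
      rw [if_pos rfl, if_neg (by omega : ¬ i + 1 = i)]
      omega
    · by_cases h2 : i + 1 = r
      · have h3 : f r ≤ f i := mono hf hi (by omega)
        have h4 := hf.1 i hi
        rw [if_pos h2, if_neg h1]
        omega
      · rw [if_neg h1, if_neg h2]
        exact hf.1 i hi
  · intro i hi
    unfold removeCell
    rw [if_neg (by omega : ¬ i = r)]
    exact hf.2 i hi

theorem cells_removeCell (hf : IsPartitionFun f L) {r c : ℕ} (hc : (r, c) ∈ corners f L) :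
    cells (removeCell f r) L = (cells f L).erase (r, c) := by
  obtain ⟨hr1, hrL, hcf, hc1, hlt⟩ := corner_facts hf hc
  have hf' := removeCell_isPartitionFun hf hc
  ext p
  obtain ⟨a, b⟩ := p
  rw [mem_cells hf', Finset.mem_erase, mem_cells hf]
  simp only [removeCell]
  by_cases h1 : a = r
  · subst h1
    rw [if_pos rfl]
    constructor
    · rintro ⟨x1, x2, x3⟩
      refine ⟨?_, x1, x2, by omega⟩
      intro h
      have hb : b = c := congrArg Prod.snd h
      omega
    · rintro ⟨hne, x1, x2, x3⟩
      refine ⟨x1, x2, ?_⟩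
      have : b ≠ c := fun h => hne (by rw [h])
      omega
  · rw [if_neg h1]
    constructor
    · rintro ⟨x1, x2, x3⟩
      refine ⟨?_, x1, x2, x3⟩
      intro h
      exact h1 (congrArg Prod.fst h)
    · rintro ⟨hne, x1, x2, x3⟩
      exact ⟨x1, x2, x3⟩

theorem card_cells_removeCell (hf : IsPartitionFun f L) {r c : ℕ}
    (hc : (r, c) ∈ corners f L) :
    (cells (removeCell f r) L).card = (cells f L).card - 1 := by
  rw [cells_removeCell hf hc, Finset.card_erase_of_mem (mem_corners.mp hc).1]

theorem corner_max (hf : IsPartitionFun f L) {r c : ℕ} (hc : (r, c) ∈ corners f L)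
    {q : ℕ × ℕ} (hq : q ∈ cells f L) (h1 : r ≤ q.1) (h2 : c ≤ q.2) : q = (r, c) := by
  obtain ⟨hr1, hrL, hcf, hc1, hlt⟩ := corner_facts hf hc
  rw [mem_cells hf] at hq
  have hmono : f q.1 ≤ f r := mono hf hr1 h1
  have hq1 : q.1 = r := by
    by_contra h
    have : f q.1 ≤ f (r + 1) := mono hf (by omega) (by omega)
    omega
  have hq2 : q.2 = c := by omega
  exact Prod.ext hq1 hq2

/-- Glue the value `n` at position `(r, c)`. -/
def glue (r c n : ℕ) (T : ℕ × ℕ → ℕ) : ℕ × ℕ → ℕ :=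
  fun p => if p = (r, c) then n else T p

theorem glue_isSYT (hf : IsPartitionFun f L) {r c : ℕ} (hc : (r, c) ∈ corners f L)
    {T : ℕ × ℕ → ℕ} (hT : IsSYT (removeCell f r) L T) :
    IsSYT f L (glue r c (cells f L).card T) := by
  classical
  set n := (cells f L).card with hn
  have hcc : (r, c) ∈ cells f L := (mem_corners.mp hc).1
  have hn1 : 1 ≤ n := Finset.card_pos.mpr ⟨_, hcc⟩
  have hcells : cells (removeCell f r) L = (cells f L).erase (r, c) := cells_removeCell hf hc
  have hcard : (cells (removeCell f r) L).card = n - 1 := card_cells_removeCell hf hc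
  have hmem' : ∀ p ∈ cells f L, p ≠ (r, c) → p ∈ cells (removeCell f r) L := by
    intro p hp hne
    rw [hcells]
    exact Finset.mem_erase.mpr ⟨hne, hp⟩
  have hrange : ∀ p ∈ cells f L, p ≠ (r, c) → 1 ≤ T p ∧ T p ≤ n - 1 := by
    intro p hp hne
    have := hT.1.mapsTo (Finset.mem_coe.mpr (hmem' p hp hne))
    rw [hcard] at this
    simpa using this
  refine ⟨⟨?_, ?_, ?_⟩, ?_, ?_⟩
  · -- MapsTo
    intro p hp
    simp only [Finset.mem_coe] at hp
    simp only [Finset.coe_Icc, Set.mem_Icc]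
    by_cases h : p = (r, c)
    · simp only [glue, if_pos h]
      omega
    · have := hrange p hp h
      simp only [glue, if_neg h]
      omega
  · -- InjOn
    intro p hp q hq hpq
    simp only [Finset.mem_coe] at hp hq
    by_cases h1 : p = (r, c) <;> by_cases h2 : q = (r, c)
    · rw [h1, h2]
    · exfalso
      simp only [glue, if_pos h1, if_neg h2] at hpq
      have := hrange q hq h2
      omega
    · exfalso
      simp only [glue, if_neg h1, if_pos h2] at hpq
      have := hrange p hp h1
      omega
    · simp only [glue, if_neg h1, if_neg h2] at hpq
      exact hT.1.injOn (Finset.mem_coe.mpr (hmem' p hp h1))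
        (Finset.mem_coe.mpr (hmem' q hq h2)) hpq
  · -- SurjOn
    intro m hm
    simp only [Finset.coe_Icc, Set.mem_Icc] at hm
    by_cases h : m = n
    · exact ⟨(r, c), Finset.mem_coe.mpr hcc, by simp [glue, h]⟩
    · have hm' : m ∈ (↑(Finset.Icc 1 (cells (removeCell f r) L).card) : Set ℕ) := by
        simp only [Finset.coe_Icc, Set.mem_Icc, hcard]
        omega
      obtain ⟨p, hp, hTp⟩ := hT.1.surjOn hm'
      have hp' : p ∈ (cells f L).erase (r, c) := by
        rw [← hcells]
        exact Finset.mem_coe.mp hp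
      refine ⟨p, Finset.mem_coe.mpr (Finset.mem_of_mem_erase hp'), ?_⟩
      simp only [glue, if_neg (Finset.ne_of_mem_erase hp')]
      exact hTp
  · -- strict monotonicity
    intro p hp q hq h1 h2 hne
    by_cases hq' : q = (r, c)
    · subst hq'
      have hp' : p ≠ (r, c) := hne
      have := hrange p hp hp'
      have hv1 : glue r c n T (r, c) = n := by simp [glue]
      have hv2 : glue r c n T p = T p := by simp [glue, hp']
      rw [hv1, hv2]
      omega
    · by_cases hp' : p = (r, c)
      · exfalso
        subst hp'
        exact hq' (corner_max hf hc hq h1 h2)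
      · simp only [glue, if_neg hp', if_neg hq']
        exact hT.2.1 p (hmem' p hp hp') q (hmem' q hq hq') h1 h2 hne
  · -- vanishing off cells
    intro p hp
    have hne : p ≠ (r, c) := fun h => hp (h ▸ hcc)
    simp only [glue, if_neg hne]
    apply hT.2.2
    rw [hcells]
    intro hmem
    exact hp (Finset.mem_of_mem_erase hmem)

theorem exists_max_corner (hf : IsPartitionFun f L) {T : ℕ × ℕ → ℕ} (hT : IsSYT f L T)
    (hn : 1 ≤ (cells f L).card) :
    ∃ p ∈ corners f L, T p = (cells f L).card := by
  set n := (cells f L).card with hdefn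
  have hmem : n ∈ (↑(Finset.Icc 1 n) : Set ℕ) := by
    simp only [Finset.coe_Icc, Set.mem_Icc]
    omega
  obtain ⟨p, hp, hTp⟩ := hT.1.surjOn hmem
  have hpc : p ∈ cells f L := Finset.mem_coe.mp hp
  have hfacts := (mem_cells hf).mp hpc
  have hval : ∀ q ∈ cells f L, T q ≤ n := by
    intro q hq
    have := hT.1.mapsTo (Finset.mem_coe.mpr hq)
    simp only [Finset.coe_Icc, Set.mem_Icc] at this
    exact this.2
  refine ⟨p, mem_corners.mpr ⟨hpc, ?_, ?_⟩, hTp⟩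
  · by_contra h
    have hlt : p.2 < f p.1 := by omega
    have hqc : (p.1, p.2 + 1) ∈ cells f L := (mem_cells hf).mpr
      ⟨hfacts.1, by show 1 ≤ p.2 + 1; omega, by show p.2 + 1 ≤ f p.1; omega⟩
    have hne : p ≠ (p.1, p.2 + 1) := by
      intro hpq
      have h5 : p.2 = p.2 + 1 := congrArg Prod.snd hpq
      omega
    have h6 := hT.2.1 p hpc (p.1, p.2 + 1) hqc (le_refl _)
      (by show p.2 ≤ p.2 + 1; omega) hne
    have h7 := hval (p.1, p.2 + 1) hqc
    omega
  · by_contra h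
    have hqc : (p.1 + 1, p.2) ∈ cells f L := (mem_cells hf).mpr
      ⟨by show 1 ≤ p.1 + 1; omega, hfacts.2.1, by show p.2 ≤ f (p.1 + 1); omega⟩
    have hne : p ≠ (p.1 + 1, p.2) := by
      intro hpq
      have h5 : p.1 = p.1 + 1 := congrArg Prod.fst hpq
      omega
    have h6 := hT.2.1 p hpc (p.1 + 1, p.2) hqc (by show p.1 ≤ p.1 + 1; omega)
      (le_refl _) hne
    have h7 := hval (p.1 + 1, p.2) hqc
    omega

/-- Remove the maximal entry. -/
def cut (r c : ℕ) (T : ℕ × ℕ → ℕ) : ℕ × ℕ → ℕ :=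
  fun p => if p = (r, c) then 0 else T p

theorem cut_isSYT (hf : IsPartitionFun f L) {r c : ℕ} (hc : (r, c) ∈ corners f L)
    {T : ℕ × ℕ → ℕ} (hT : IsSYT f L T) (hval : T (r, c) = (cells f L).card) :
    IsSYT (removeCell f r) L (cut r c T) := by
  classical
  set n := (cells f L).card with hdefn
  have hcc : (r, c) ∈ cells f L := (mem_corners.mp hc).1
  have hn1 : 1 ≤ n := Finset.card_pos.mpr ⟨_, hcc⟩
  have hcells : cells (removeCell f r) L = (cells f L).erase (r, c) := cells_removeCell hf hc
  have hcard : (cells (removeCell f r) L).card = n - 1 := card_cells_removeCell hf hc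
  have hmem : ∀ p ∈ cells (removeCell f r) L, p ≠ (r, c) ∧ p ∈ cells f L := by
    intro p hp
    rw [hcells] at hp
    exact ⟨Finset.ne_of_mem_erase hp, Finset.mem_of_mem_erase hp⟩
  have hrange : ∀ p ∈ cells (removeCell f r) L, 1 ≤ T p ∧ T p ≤ n - 1 := by
    intro p hp
    obtain ⟨hne, hpc⟩ := hmem p hp
    have h1 := hT.1.mapsTo (Finset.mem_coe.mpr hpc)
    simp only [Finset.coe_Icc, Set.mem_Icc] at h1
    have h2 : T p ≠ n := by
      intro h
      apply hne
      exact hT.1.injOn (Finset.mem_coe.mpr hpc) (Finset.mem_coe.mpr hcc) (by rw [h, hval])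
    omega
  refine ⟨⟨?_, ?_, ?_⟩, ?_, ?_⟩
  · intro p hp
    simp only [Finset.mem_coe] at hp
    obtain ⟨hne, _⟩ := hmem p hp
    have := hrange p hp
    simp only [Finset.coe_Icc, Set.mem_Icc, hcard, cut, if_neg hne]
    omega
  · intro p hp q hq hpq
    simp only [Finset.mem_coe] at hp hq
    obtain ⟨hnep, hpc⟩ := hmem p hp
    obtain ⟨hneq, hqc⟩ := hmem q hq
    simp only [cut, if_neg hnep, if_neg hneq] at hpq
    exact hT.1.injOn (Finset.mem_coe.mpr hpc) (Finset.mem_coe.mpr hqc) hpq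
  · intro m hm
    simp only [Finset.coe_Icc, Set.mem_Icc, hcard] at hm
    have hm' : m ∈ (↑(Finset.Icc 1 n) : Set ℕ) := by
      simp only [Finset.coe_Icc, Set.mem_Icc]
      omega
    obtain ⟨p, hp, hTp⟩ := hT.1.surjOn hm'
    have hpc : p ∈ cells f L := Finset.mem_coe.mp hp
    have hne : p ≠ (r, c) := by
      intro h
      rw [h, hval] at hTp
      omega
    have hp' : p ∈ cells (removeCell f r) L := by
      rw [hcells]
      exact Finset.mem_erase.mpr ⟨hne, hpc⟩
    exact ⟨p, Finset.mem_coe.mpr hp', by simp only [cut, if_neg hne]; exact hTp⟩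
  · intro p hp q hq h1 h2 hne
    obtain ⟨hnep, hpc⟩ := hmem p hp
    obtain ⟨hneq, hqc⟩ := hmem q hq
    simp only [cut, if_neg hnep, if_neg hneq]
    exact hT.2.1 p hpc q hqc h1 h2 hne
  · intro p hp
    by_cases h : p = (r, c)
    · simp [cut, h]
    · simp only [cut, if_neg h]
      apply hT.2.2
      intro hpc
      apply hp
      rw [hcells]
      exact Finset.mem_erase.mpr ⟨h, hpc⟩

theorem sytCard_rec (hf : IsPartitionFun f L) (hn : 1 ≤ (cells f L).card) :
    sytCard f L = ∑ p ∈ corners f L, sytCard (removeCell f p.1) L := by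
  classical
  set n := (cells f L).card with hdefn
  let Ψ : (Σ p : ↥(corners f L), {T : ℕ × ℕ → ℕ // IsSYT (removeCell f p.1.1) L T}) →
      {T : ℕ × ℕ → ℕ // IsSYT f L T} :=
    fun x => ⟨glue x.1.1.1 x.1.1.2 n x.2.1, glue_isSYT hf x.1.2 x.2.2⟩
  have hbij : Function.Bijective Ψ := by
    constructor
    · rintro ⟨⟨⟨r, c⟩, hc⟩, ⟨T, hT⟩⟩ ⟨⟨⟨r', c'⟩, hc'⟩, ⟨S, hS⟩⟩ heq
      have hfun : glue r c n T = glue r' c' n S := congrArg Subtype.val heq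
      have hcells' : cells (removeCell f r') L = (cells f L).erase (r', c') :=
        cells_removeCell hf hc'
      have hkey : (r, c) = (r', c') := by
        by_contra hne
        have h1 : glue r c n T (r, c) = n := by simp [glue]
        have h2 : glue r' c' n S (r, c) = S (r, c) := by simp [glue, hne]
        have h3 : S (r, c) = n := by rw [← h2, ← hfun, h1]
        by_cases hm : (r, c) ∈ cells (removeCell f r') L
        · have := hS.1.mapsTo (Finset.mem_coe.mpr hm)
          rw [card_cells_removeCell hf hc'] at this
          simp only [Finset.coe_Icc, Set.mem_Icc] at this
          have hn1 : 1 ≤ n := hn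
          omega
        · have := hS.2.2 _ hm
          rw [h3] at this
          omega
      have hr : r = r' := congrArg Prod.fst hkey
      have hcl : c = c' := congrArg Prod.snd hkey
      subst hr
      subst hcl
      have hTS : T = S := by
        funext p
        by_cases h : p = (r, c)
        · subst h
          rw [hT.2.2 _ (by rw [cells_removeCell hf hc]; exact Finset.notMem_erase _ _),
            hS.2.2 _ (by rw [cells_removeCell hf hc]; exact Finset.notMem_erase _ _)]
        · have := congrFun hfun p
          simpa [glue, if_neg h] using this
      subst hTS
      rfl
    · rintro ⟨T, hT⟩
      obtain ⟨p₀, hp₀c, hp₀v⟩ := exists_max_corner hf hT hn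
      refine ⟨⟨⟨p₀, hp₀c⟩, ⟨cut p₀.1 p₀.2 T, ?_⟩⟩, ?_⟩
      · exact cut_isSYT hf hp₀c hT hp₀v
      · apply Subtype.ext
        funext p
        simp only [Ψ]
        by_cases h : p = (p₀.1, p₀.2)
        · rw [show p₀ = (p₀.1, p₀.2) from rfl] at hp₀v
          simp [glue, h, hp₀v, hdefn]
        · simp [glue, cut, h]
  haveI : ∀ p : ↥(corners f L), Finite {T : ℕ × ℕ → ℕ // IsSYT (removeCell f p.1.1) L T} :=
    fun p => syt_finite _ _
  haveI : Finite {T : ℕ × ℕ → ℕ // IsSYT f L T} := syt_finite _ _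
  letI : ∀ p : ↥(corners f L),
      Fintype {T : ℕ × ℕ → ℕ // IsSYT (removeCell f p.1.1) L T} :=
    fun p => Fintype.ofFinite _
  letI : Fintype {T : ℕ × ℕ → ℕ // IsSYT f L T} := Fintype.ofFinite _
  rw [sytCard_def, Nat.card_eq_fintype_card, ← Fintype.card_of_bijective hbij,
    Fintype.card_sigma]
  rw [← Finset.sum_coe_sort (corners f L) (fun p => sytCard (removeCell f p.1) L)]
  refine Finset.sum_congr rfl fun p _ => ?_
  rw [sytCard_def, Nat.card_eq_fintype_card]

theorem sytCard_empty (hf : IsPartitionFun f L) (hn : (cells f L).card = 0) :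
    sytCard f L = 1 := by
  have hc : cells f L = ∅ := Finset.card_eq_zero.mp hn
  rw [sytCard_def]
  rw [Nat.card_eq_one_iff_unique]
  constructor
  · constructor
    intro T S
    apply Subtype.ext
    funext p
    rw [T.2.2.2 p (by rw [hc]; exact Finset.notMem_empty p),
      S.2.2.2 p (by rw [hc]; exact Finset.notMem_empty p)]
  · refine ⟨fun _ => 0, ⟨?_, ?_, ?_⟩, ?_, ?_⟩
    · intro p hp
      rw [hc] at hp
      simp at hp
    · intro p hp
      rw [hc] at hp
      simp at hp
    · intro m hm
      rw [hn] at hm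
      simp at hm
    · intro p hp
      rw [hc] at hp
      simp at hp
    · intro p _
      rfl


/-! ### Rational versions of the product identities -/

/-- `ℓ_i` as a rational number. -/
def ellQ (f : ℕ → ℕ) (L i : ℕ) : ℚ := (f i : ℚ) + (L : ℚ) - (i : ℚ)

/-- `∏_{s > r} (ℓ_r - ℓ_s)`. -/
def innerQ (f : ℕ → ℕ) (L r : ℕ) : ℚ := ∏ s ∈ Finset.Ioc r L, (ellQ f L r - ellQ f L s)

/-- The Vandermonde-type product. -/
def DQ (f : ℕ → ℕ) (L : ℕ) : ℚ := ∏ i ∈ Finset.Icc 1 L, innerQ f L i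

/-- The hook product. -/
def AQ (f : ℕ → ℕ) (L : ℕ) : ℚ := ∏ z ∈ cells f L, (hook f L z.1 z.2 : ℚ)

/-- The factorial product. -/
def FQ (f : ℕ → ℕ) (L : ℕ) : ℚ := ∏ i ∈ Finset.Icc 1 L, ((ell f L i).factorial : ℚ)

theorem ellQ_cast {i : ℕ} (hi : i ≤ L) : ((ell f L i : ℕ) : ℚ) = ellQ f L i := by
  unfold ell ellQ
  push_cast [Nat.cast_sub hi]
  ring

theorem ellQ_strict (hf : IsPartitionFun f L) {i i' : ℕ} (h1 : 1 ≤ i) (h2 : i < i')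
    (h3 : i' ≤ L) : ellQ f L i' < ellQ f L i := by
  have h := ell_strict hf h1 h2 h3
  rw [← ellQ_cast (by omega : i ≤ L), ← ellQ_cast h3]
  exact_mod_cast h

theorem AQ_cast : AQ f L = ((∏ z ∈ cells f L, hook f L z.1 z.2 : ℕ) : ℚ) := by
  rw [AQ, Nat.cast_prod]

theorem innerQ_cast (hf : IsPartitionFun f L) {i : ℕ} (h1 : 1 ≤ i) :
    innerQ f L i = ((∏ i' ∈ Finset.Icc (i + 1) L, (ell f L i - ell f L i') : ℕ) : ℚ) := by
  rw [innerQ, Nat.cast_prod, Finset.Icc_add_one_left_eq_Ioc]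
  refine Finset.prod_congr rfl fun s hs => ?_
  simp only [Finset.mem_Ioc] at hs
  have hlt := ell_strict hf h1 hs.1 hs.2
  rw [Nat.cast_sub (by omega), ellQ_cast (by omega : i ≤ L), ellQ_cast hs.2]

theorem AQ_mul_DQ (hf : IsPartitionFun f L) : AQ f L * DQ f L = FQ f L := by
  rw [AQ, DQ, FQ]
  have h1 : (∏ z ∈ cells f L, (hook f L z.1 z.2 : ℚ))
      = ∏ i ∈ Finset.Icc 1 L, ∏ j ∈ Finset.Icc 1 (f i), (hook f L i j : ℚ) :=
    prod_cells hf (fun i j => (hook f L i j : ℚ))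
  rw [h1, ← Finset.prod_mul_distrib]
  refine Finset.prod_congr rfl fun i hi => ?_
  simp only [Finset.mem_Icc] at hi
  rw [innerQ_cast hf hi.1, ← Nat.cast_prod, ← Nat.cast_mul,
    row_factorial hf hi.1 hi.2]

theorem AQ_ne_zero : AQ f L ≠ 0 := by
  rw [AQ]
  apply Finset.prod_ne_zero_iff.mpr
  intro z _
  have := hook_pos (f := f) (L := L) z.1 z.2
  have h2 : (0:ℚ) < (hook f L z.1 z.2 : ℚ) := by exact_mod_cast this
  exact h2.ne'

theorem innerQ_ne_zero (hf : IsPartitionFun f L) {i : ℕ} (h1 : 1 ≤ i) : innerQ f L i ≠ 0 := by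
  rw [innerQ]
  apply Finset.prod_ne_zero_iff.mpr
  intro s hs
  simp only [Finset.mem_Ioc] at hs
  have := ellQ_strict hf h1 hs.1 hs.2
  intro h
  rw [sub_eq_zero] at h
  rw [h] at this
  exact lt_irrefl _ this

theorem DQ_ne_zero (hf : IsPartitionFun f L) : DQ f L ≠ 0 := by
  rw [DQ]
  apply Finset.prod_ne_zero_iff.mpr
  intro i hi
  simp only [Finset.mem_Icc] at hi
  exact innerQ_ne_zero hf hi.1


/-! ### Behaviour under removing a corner -/

theorem ellQ_removeCell_ne (hr : r ≠ 0 ∨ True) {s : ℕ} (hs : s ≠ r) :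
    ellQ (removeCell f r) L s = ellQ f L s := by
  unfold ellQ removeCell
  rw [if_neg hs]

theorem ellQ_removeCell_self (hf : IsPartitionFun f L) {r c : ℕ}
    (hc : (r, c) ∈ corners f L) :
    ellQ (removeCell f r) L r = ellQ f L r - 1 := by
  obtain ⟨hr1, hrL, hcf, hc1, hlt⟩ := corner_facts hf hc
  unfold ellQ removeCell
  rw [if_pos rfl, Nat.cast_sub (by omega : 1 ≤ f r)]
  push_cast
  ring

theorem innerQ_removeCell_gt (hgt : r < i) :
    innerQ (removeCell f r) L i = innerQ f L i := by
  unfold innerQ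
  refine Finset.prod_congr rfl fun s hs => ?_
  simp only [Finset.mem_Ioc] at hs
  rw [ellQ_removeCell_ne (Or.inr trivial) (by omega : s ≠ r),
    ellQ_removeCell_ne (Or.inr trivial) (by omega : i ≠ r)]

theorem innerQ_removeCell_self (hf : IsPartitionFun f L) {r c : ℕ}
    (hc : (r, c) ∈ corners f L) :
    innerQ (removeCell f r) L r = ∏ s ∈ Finset.Ioc r L, (ellQ f L r - ellQ f L s - 1) := by
  unfold innerQ
  refine Finset.prod_congr rfl fun s hs => ?_
  simp only [Finset.mem_Ioc] at hs
  rw [ellQ_removeCell_ne (Or.inr trivial) (by omega : s ≠ r),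
    ellQ_removeCell_self hf hc]
  ring

theorem innerQ_removeCell_lt (hf : IsPartitionFun f L) {r c i : ℕ}
    (hc : (r, c) ∈ corners f L) (hi1 : 1 ≤ i) (hir : i < r) :
    innerQ (removeCell f r) L i * (ellQ f L i - ellQ f L r)
      = innerQ f L i * (ellQ f L i - ellQ f L r + 1) := by
  obtain ⟨hr1, hrL, hcf, hc1, hlt⟩ := corner_facts hf hc
  have hrmem : r ∈ Finset.Ioc i L := Finset.mem_Ioc.mpr ⟨hir, hrL⟩
  have h1 : innerQ (removeCell f r) L i
      = (ellQ f L i - (ellQ f L r - 1)) * ∏ s ∈ (Finset.Ioc i L).erase r,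
        (ellQ f L i - ellQ f L s) := by
    unfold innerQ
    rw [← Finset.mul_prod_erase _ _ hrmem, ellQ_removeCell_self hf hc,
      ellQ_removeCell_ne (Or.inr trivial) (by omega : i ≠ r)]
    congr 1
    refine Finset.prod_congr rfl fun s hs => ?_
    rw [ellQ_removeCell_ne (Or.inr trivial) (Finset.ne_of_mem_erase hs)]
  have h2 : innerQ f L i
      = (ellQ f L i - ellQ f L r) * ∏ s ∈ (Finset.Ioc i L).erase r,
        (ellQ f L i - ellQ f L s) := by
    unfold innerQ
    rw [← Finset.mul_prod_erase _ _ hrmem]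
  rw [h1, h2]
  ring

theorem Ioc_pred_self (hr : 1 ≤ r) : Finset.Ioc (r - 1) r = {r} := by
  ext x
  simp only [Finset.mem_Ioc, Finset.mem_singleton]
  omega

theorem DQ_split (g : ℕ → ℕ) (hr1 : 1 ≤ r) (hrL : r ≤ L) :
    DQ g L = (∏ i ∈ Finset.Ioc 0 (r - 1), innerQ g L i) * innerQ g L r
      * ∏ i ∈ Finset.Ioc r L, innerQ g L i := by
  have hIcc : Finset.Icc 1 L = Finset.Ioc 0 L := by
    ext x
    simp only [Finset.mem_Icc, Finset.mem_Ioc]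
    omega
  have e1 : (∏ i ∈ Finset.Ioc 0 (r - 1), innerQ g L i)
      * (∏ i ∈ Finset.Ioc (r - 1) L, innerQ g L i)
      = ∏ i ∈ Finset.Ioc 0 L, innerQ g L i :=
    Finset.prod_Ioc_consecutive _ (by omega) (by omega)
  have e2 : (∏ i ∈ Finset.Ioc (r - 1) r, innerQ g L i)
      * (∏ i ∈ Finset.Ioc r L, innerQ g L i)
      = ∏ i ∈ Finset.Ioc (r - 1) L, innerQ g L i :=
    Finset.prod_Ioc_consecutive _ (by omega) (by omega)
  rw [Ioc_pred_self hr1, Finset.prod_singleton] at e2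
  rw [DQ, hIcc, ← e1, ← e2]
  ring

theorem DQ_ratio (hf : IsPartitionFun f L) {r c : ℕ} (hc : (r, c) ∈ corners f L) :
    DQ (removeCell f r) L * (∏ i ∈ Finset.Ioc 0 (r - 1), (ellQ f L i - ellQ f L r))
        * innerQ f L r
      = DQ f L * (∏ i ∈ Finset.Ioc 0 (r - 1), (ellQ f L i - ellQ f L r + 1))
        * innerQ (removeCell f r) L r := by
  obtain ⟨hr1, hrL, hcf, hc1, hlt⟩ := corner_facts hf hc
  rw [DQ_split (removeCell f r) hr1 hrL, DQ_split f hr1 hrL]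
  have hB : (∏ i ∈ Finset.Ioc r L, innerQ (removeCell f r) L i)
      = ∏ i ∈ Finset.Ioc r L, innerQ f L i := by
    refine Finset.prod_congr rfl fun i hi => ?_
    simp only [Finset.mem_Ioc] at hi
    exact innerQ_removeCell_gt hi.1
  have hA : (∏ i ∈ Finset.Ioc 0 (r - 1), innerQ (removeCell f r) L i)
        * (∏ i ∈ Finset.Ioc 0 (r - 1), (ellQ f L i - ellQ f L r))
      = (∏ i ∈ Finset.Ioc 0 (r - 1), innerQ f L i)
        * (∏ i ∈ Finset.Ioc 0 (r - 1), (ellQ f L i - ellQ f L r + 1)) := by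
    rw [← Finset.prod_mul_distrib, ← Finset.prod_mul_distrib]
    refine Finset.prod_congr rfl fun i hi => ?_
    simp only [Finset.mem_Ioc] at hi
    exact innerQ_removeCell_lt hf hc (by omega) (by omega)
  set P' := ∏ i ∈ Finset.Ioc 0 (r - 1), innerQ (removeCell f r) L i with hP'
  set P := ∏ i ∈ Finset.Ioc 0 (r - 1), innerQ f L i with hP
  set Q := ∏ i ∈ Finset.Ioc r L, innerQ f L i with hQ
  set X := ∏ i ∈ Finset.Ioc 0 (r - 1), (ellQ f L i - ellQ f L r) with hX
  set Y := ∏ i ∈ Finset.Ioc 0 (r - 1), (ellQ f L i - ellQ f L r + 1) with hY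
  rw [hB]
  linear_combination (innerQ (removeCell f r) L r * Q * innerQ f L r) * hA


theorem ell_removeCell_ne {s : ℕ} (hs : s ≠ r) : ell (removeCell f r) L s = ell f L s := by
  unfold ell removeCell
  rw [if_neg hs]

theorem FQ_removeCell (hf : IsPartitionFun f L) {r c : ℕ} (hc : (r, c) ∈ corners f L) :
    FQ f L = ellQ f L r * FQ (removeCell f r) L := by
  obtain ⟨hr1, hrL, hcf, hc1, hlt⟩ := corner_facts hf hc
  have hrmem : r ∈ Finset.Icc 1 L := Finset.mem_Icc.mpr ⟨hr1, hrL⟩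
  rw [FQ, FQ, ← Finset.mul_prod_erase _ _ hrmem, ← Finset.mul_prod_erase _ _ hrmem]
  have herase : (∏ i ∈ (Finset.Icc 1 L).erase r, ((ell (removeCell f r) L i).factorial : ℚ))
      = ∏ i ∈ (Finset.Icc 1 L).erase r, ((ell f L i).factorial : ℚ) := by
    refine Finset.prod_congr rfl fun i hi => ?_
    rw [ell_removeCell_ne (Finset.ne_of_mem_erase hi)]
  rw [herase]
  have hself : ell (removeCell f r) L r = ell f L r - 1 := by
    unfold ell removeCell
    rw [if_pos rfl]
    omega
  have hge : 1 ≤ ell f L r := by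
    unfold ell
    omega
  obtain ⟨m, hm⟩ : ∃ m, ell f L r = m + 1 := ⟨ell f L r - 1, by omega⟩
  have hfac : (ell f L r).factorial = ell f L r * (ell (removeCell f r) L r).factorial := by
    rw [hself, hm]
    simp [Nat.factorial_succ]
  rw [hfac]
  have hcast : ((ell f L r : ℕ) : ℚ) = ellQ f L r := ellQ_cast hrL
  push_cast
  rw [hcast]
  ring

theorem X1_ne_zero (hf : IsPartitionFun f L) (hrL : r ≤ L) :
    (∏ i ∈ Finset.Ioc 0 (r - 1), (ellQ f L i - ellQ f L r)) ≠ 0 := by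
  apply Finset.prod_ne_zero_iff.mpr
  intro i hi
  simp only [Finset.mem_Ioc] at hi
  have := ellQ_strict hf (by omega : 1 ≤ i) (by omega : i < r) hrL
  intro h
  rw [sub_eq_zero] at h
  rw [h] at this
  exact lt_irrefl _ this

/-- The summand of the key identity. -/
def tQ (f : ℕ → ℕ) (L r : ℕ) : ℚ :=
  ellQ f L r * ∏ s ∈ (Finset.Icc 1 L).erase r,
    ((ellQ f L r - ellQ f L s - 1) / (ellQ f L r - ellQ f L s))

theorem erase_split (hr1 : 1 ≤ r) (hrL : r ≤ L) (g : ℕ → ℚ) :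
    ∏ s ∈ (Finset.Icc 1 L).erase r, g s
      = (∏ s ∈ Finset.Ioc 0 (r - 1), g s) * ∏ s ∈ Finset.Ioc r L, g s := by
  have hunion : (Finset.Icc 1 L).erase r = Finset.Ioc 0 (r - 1) ∪ Finset.Ioc r L := by
    ext x
    simp only [Finset.mem_erase, Finset.mem_Icc, Finset.mem_union, Finset.mem_Ioc]
    omega
  rw [hunion, Finset.prod_union]
  rw [Finset.disjoint_left]
  intro x hx hy
  simp only [Finset.mem_Ioc] at hx hy
  omega

theorem tQ_mul (hf : IsPartitionFun f L) {r c : ℕ} (hc : (r, c) ∈ corners f L) :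
    tQ f L r * ((∏ i ∈ Finset.Ioc 0 (r - 1), (ellQ f L i - ellQ f L r)) * innerQ f L r)
      = ellQ f L r * ((∏ i ∈ Finset.Ioc 0 (r - 1), (ellQ f L i - ellQ f L r + 1))
        * innerQ (removeCell f r) L r) := by
  obtain ⟨hr1, hrL, hcf, hc1, hlt⟩ := corner_facts hf hc
  have hX := X1_ne_zero hf hrL
  have hI : innerQ f L r ≠ 0 := innerQ_ne_zero hf hr1
  rw [tQ, erase_split hr1 hrL]
  have hconv : (∏ s ∈ Finset.Ioc 0 (r - 1),
      ((ellQ f L r - ellQ f L s - 1) / (ellQ f L r - ellQ f L s)))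
      = ∏ s ∈ Finset.Ioc 0 (r - 1),
        ((ellQ f L s - ellQ f L r + 1) / (ellQ f L s - ellQ f L r)) := by
    refine Finset.prod_congr rfl fun s _ => ?_
    have e1 : ellQ f L r - ellQ f L s - 1 = -(ellQ f L s - ellQ f L r + 1) := by ring
    have e2 : ellQ f L r - ellQ f L s = -(ellQ f L s - ellQ f L r) := by ring
    rw [e1, e2, neg_div_neg_eq]
  rw [hconv, Finset.prod_div_distrib, Finset.prod_div_distrib]
  rw [innerQ_removeCell_self hf hc]
  have hIdef : innerQ f L r = ∏ s ∈ Finset.Ioc r L, (ellQ f L r - ellQ f L s) := rfl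
  have hD2 : (∏ s ∈ Finset.Ioc r L, (ellQ f L r - ellQ f L s)) ≠ 0 := hIdef ▸ hI
  rw [hIdef, div_mul_div_comm, mul_assoc, div_mul_cancel₀ _ (mul_ne_zero hX hD2)]

theorem AQ_ratio (hf : IsPartitionFun f L) {r c : ℕ} (hc : (r, c) ∈ corners f L) :
    AQ f L = tQ f L r * AQ (removeCell f r) L := by
  obtain ⟨hr1, hrL, hcf, hc1, hlt⟩ := corner_facts hf hc
  have hf' := removeCell_isPartitionFun hf hc
  have h1 : AQ f L * DQ f L = FQ f L := AQ_mul_DQ hf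
  have h2 : AQ (removeCell f r) L * DQ (removeCell f r) L = FQ (removeCell f r) L :=
    AQ_mul_DQ hf'
  have h3 : FQ f L = ellQ f L r * FQ (removeCell f r) L := FQ_removeCell hf hc
  have h4 := DQ_ratio hf hc
  have h5 := tQ_mul hf hc
  have hX := X1_ne_zero hf hrL
  have hI : innerQ f L r ≠ 0 := innerQ_ne_zero hf hr1
  have hD : DQ f L ≠ 0 := DQ_ne_zero hf
  set X := ∏ i ∈ Finset.Ioc 0 (r - 1), (ellQ f L i - ellQ f L r) with hXd
  set Y := ∏ i ∈ Finset.Ioc 0 (r - 1), (ellQ f L i - ellQ f L r + 1) with hYd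
  apply mul_right_cancel₀ (b := DQ f L * (X * innerQ f L r))
    (by exact mul_ne_zero hD (mul_ne_zero hX hI))
  linear_combination (X * innerQ f L r) * h1 + (X * innerQ f L r) * h3
    - (ellQ f L r * X * innerQ f L r) * h2
    + (ellQ f L r * AQ (removeCell f r) L) * h4
    - (AQ (removeCell f r) L * DQ f L) * h5

theorem tQ_zero (hf : IsPartitionFun f L) {r : ℕ} (hr : r ∈ Finset.Icc 1 L)
    (hnc : (r, f r) ∉ corners f L) : tQ f L r = 0 := by
  simp only [Finset.mem_Icc] at hr
  have hcases : f r = 0 ∨ f r ≤ f (r + 1) := by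
    by_contra h
    push_neg at h
    refine hnc (mem_corners.mpr ⟨(mem_cells hf).mpr ?_, ?_, ?_⟩)
    · exact ⟨by show 1 ≤ r; omega, by show 1 ≤ f r; omega, by show f r ≤ f r; omega⟩
    · rfl
    · show f (r + 1) < f r
      omega
  by_cases hrL : r = L
  · have hf1 : f (r + 1) = 0 := hf.2 _ (by omega)
    have hfL : f r = 0 := by omega
    have hz : ellQ f L r = 0 := by
      unfold ellQ
      rw [hfL, hrL]
      push_cast
      ring
    rw [tQ, hz, zero_mul]
  · have hlt : r < L := by omega
    have hmono := hf.1 r hr.1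
    have hfr1 : f (r + 1) = f r := by omega
    have hsmem : r + 1 ∈ (Finset.Icc 1 L).erase r := by
      simp only [Finset.mem_erase, Finset.mem_Icc]
      omega
    have hzero : (ellQ f L r - ellQ f L (r + 1) - 1) / (ellQ f L r - ellQ f L (r + 1)) = 0 := by
      have : ellQ f L r - ellQ f L (r + 1) - 1 = 0 := by
        unfold ellQ
        rw [hfr1]
        push_cast
        ring
      rw [this, zero_div]
    rw [tQ, Finset.prod_eq_zero hsmem hzero, mul_zero]

theorem sum_Icc_id_Q (L : ℕ) : ∑ i ∈ Finset.Icc 1 L, (i : ℚ) = L * (L + 1) / 2 := by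
  induction L with
  | zero => simp
  | succ m ih =>
    rw [Finset.sum_Icc_succ_top (by omega), ih]
    push_cast
    ring

theorem sum_ellQ (hf : IsPartitionFun f L) {n : ℕ} (hn : (cells f L).card = n) :
    ∑ r ∈ Finset.Icc 1 L, ellQ f L r = (n : ℚ) + L * (L - 1) / 2 := by
  unfold ellQ
  rw [Finset.sum_sub_distrib, Finset.sum_add_distrib, sum_Icc_id_Q, Finset.sum_const,
    Nat.card_Icc]
  have hsum : ∑ r ∈ Finset.Icc 1 L, ((f r : ℚ)) = (n : ℚ) := by
    rw [← Nat.cast_sum, ← card_cells hf, hn]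
  rw [hsum]
  simp only [Nat.add_sub_cancel, nsmul_eq_mul]
  ring

theorem ellQ_injOn (hf : IsPartitionFun f L) :
    Set.InjOn (ellQ f L) (Finset.Icc 1 L) := by
  intro a ha b hb hab
  simp only [Finset.coe_Icc, Set.mem_Icc] at ha hb
  rcases lt_trichotomy a b with h | h | h
  · have := ellQ_strict hf ha.1 h hb.2
    rw [hab] at this
    exact absurd this (lt_irrefl _)
  · exact h
  · have := ellQ_strict hf hb.1 h ha.2
    rw [hab] at this
    exact absurd this (lt_irrefl _)

theorem erase_image (hf : IsPartitionFun f L) {r : ℕ} (hr : r ∈ Finset.Icc 1 L) :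
    ((Finset.Icc 1 L).image (ellQ f L)).erase (ellQ f L r)
      = ((Finset.Icc 1 L).erase r).image (ellQ f L) := by
  have hinj := ellQ_injOn hf
  ext y
  simp only [Finset.mem_erase, Finset.mem_image]
  constructor
  · rintro ⟨hne, s, hs, rfl⟩
    refine ⟨s, ⟨?_, hs⟩, rfl⟩
    intro h
    subst h
    exact hne rfl
  · rintro ⟨s, ⟨hsr, hs⟩, rfl⟩
    refine ⟨?_, s, hs, rfl⟩
    intro h
    exact hsr (hinj (Finset.mem_coe.mpr hs) (Finset.mem_coe.mpr hr) h)

theorem sum_tQ (hf : IsPartitionFun f L) {n : ℕ} (hn : (cells f L).card = n) :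
    ∑ r ∈ Finset.Icc 1 L, tQ f L r = (n : ℚ) := by
  classical
  have hinj := ellQ_injOn hf
  have hinj' : ∀ x ∈ Finset.Icc 1 L, ∀ y ∈ Finset.Icc 1 L,
      ellQ f L x = ellQ f L y → x = y :=
    fun x hx y hy h => hinj (Finset.mem_coe.mpr hx) (Finset.mem_coe.mpr hy) h
  set S := (Finset.Icc 1 L).image (ellQ f L) with hS
  have hcard : S.card = L := by
    rw [hS, Finset.card_image_of_injOn hinj, Nat.card_Icc]
    omega
  have hkey := key_identity S
  rw [hS, Finset.sum_image hinj', Finset.sum_image hinj'] at hkey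
  have hterm : ∀ r ∈ Finset.Icc 1 L,
      ellQ f L r * ∏ y ∈ (((Finset.Icc 1 L).image (ellQ f L)).erase (ellQ f L r)),
        ((ellQ f L r - y - 1) / (ellQ f L r - y)) = tQ f L r := by
    intro r hr
    rw [erase_image hf hr, Finset.prod_image (fun x hx y hy h =>
      hinj (Finset.mem_coe.mpr (Finset.mem_of_mem_erase hx))
        (Finset.mem_coe.mpr (Finset.mem_of_mem_erase hy)) h)]
    rfl
  rw [Finset.sum_congr rfl hterm] at hkey
  rw [hkey, sum_ellQ hf hn, hcard]
  ring

theorem sum_corners_eq (hf : IsPartitionFun f L) (u : ℕ → ℚ) :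
    ∑ p ∈ corners f L, u p.1
      = ∑ r ∈ (Finset.Icc 1 L).filter (fun r => (r, f r) ∈ corners f L), u r := by
  classical
  have hcorners : corners f L
      = ((Finset.Icc 1 L).filter (fun r => (r, f r) ∈ corners f L)).image
        (fun r => (r, f r)) := by
    ext p
    simp only [Finset.mem_image, Finset.mem_filter, Finset.mem_Icc]
    constructor
    · intro hp
      obtain ⟨a, b⟩ := p
      obtain ⟨hr1, hrL, hcf, hc1, hlt⟩ := corner_facts hf hp
      subst hcf
      exact ⟨a, ⟨⟨hr1, hrL⟩, hp⟩, rfl⟩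
    · rintro ⟨s, ⟨_, hcor⟩, rfl⟩
      exact hcor
  conv_lhs => rw [hcorners]
  rw [Finset.sum_image (fun x _ y _ h => congrArg Prod.fst h)]

theorem main_aux : ∀ n f L, IsPartitionFun f L → (cells f L).card = n →
    sytCard f L * ∏ z ∈ cells f L, hook f L z.1 z.2 = n.factorial := by
  intro n
  induction n using Nat.strong_induction_on with
  | _ n ih =>
    intro f L hf hn
    rcases Nat.eq_zero_or_pos n with h0 | hpos
    · subst h0
      rw [sytCard_empty hf hn, Finset.card_eq_zero.mp hn, Finset.prod_empty]
      rfl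
    · have hn1 : 1 ≤ (cells f L).card := by omega
      have hQ : (sytCard f L : ℚ) * AQ f L = (n.factorial : ℚ) := by
        have hrec := sytCard_rec hf hn1
        calc (sytCard f L : ℚ) * AQ f L
            = ∑ p ∈ corners f L, (sytCard (removeCell f p.1) L : ℚ) * AQ f L := by
              rw [hrec]
              push_cast
              rw [Finset.sum_mul]
          _ = ∑ p ∈ corners f L, ((n - 1).factorial : ℚ) * tQ f L p.1 := by
              refine Finset.sum_congr rfl fun p hp => ?_
              obtain ⟨a, b⟩ := p
              have hf' := removeCell_isPartitionFun hf hp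
              have hcard' : (cells (removeCell f a) L).card = n - 1 := by
                rw [card_cells_removeCell hf hp, hn]
              have hih := ih (n - 1) (by omega) (removeCell f a) L hf' hcard'
              have hihQ : (sytCard (removeCell f a) L : ℚ) * AQ (removeCell f a) L
                  = ((n - 1).factorial : ℚ) := by
                rw [AQ_cast]
                exact_mod_cast hih
              have hratio : AQ f L = tQ f L a * AQ (removeCell f a) L := AQ_ratio hf hp
              have hAQ' : AQ (removeCell f a) L ≠ 0 := AQ_ne_zero
              simp only
              rw [hratio]
              calc (sytCard (removeCell f a) L : ℚ) * (tQ f L a * AQ (removeCell f a) L)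
                  = ((sytCard (removeCell f a) L : ℚ) * AQ (removeCell f a) L) * tQ f L a := by
                    ring
                _ = ((n - 1).factorial : ℚ) * tQ f L a := by rw [hihQ]
          _ = ((n - 1).factorial : ℚ) * ∑ p ∈ corners f L, tQ f L p.1 := by
              rw [Finset.mul_sum]
          _ = ((n - 1).factorial : ℚ) * ∑ r ∈ Finset.Icc 1 L, tQ f L r := by
              rw [sum_corners_eq hf]
              congr 1
              refine Finset.sum_subset (Finset.filter_subset _ _) fun r hr hnr => ?_
              exact tQ_zero hf hr (fun hcor => hnr (Finset.mem_filter.mpr ⟨hr, hcor⟩))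
          _ = ((n - 1).factorial : ℚ) * (n : ℚ) := by rw [sum_tQ hf hn]
          _ = (n.factorial : ℚ) := by
              obtain ⟨m, hm⟩ : ∃ m, n = m + 1 := ⟨n - 1, by omega⟩
              subst hm
              simp only [Nat.add_sub_cancel, Nat.factorial_succ]
              push_cast
              ring
      rw [AQ_cast] at hQ
      exact_mod_cast hQ

end HookAux

/-- **Hook-length formula.** `f^λ = n! / ∏_{z ∈ [λ]} h_z`, stated multiplicatively. -/
theorem hook_length_formula (f : ℕ → ℕ) (L n : ℕ) (hf : IsPartitionFun f L)
    (hn : (cells f L).card = n) :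
    sytCard f L * ∏ z ∈ cells f L, hook f L z.1 z.2 = Nat.factorial n :=
  HookAux.main_aux n f L hf hn
end

section
/- For any partition λ of n, the branching rule for hook lengths holds: Σ_{(r,s) ∈ C[λ]} (1/n) · ∏_{i=1}^{r−1} h_{is}/(h_{is}−1) · ∏_{j=1}^{s−1} h_{rj}/(h_{rj}−1) = 1, where the sum is over all corners (r,s) of λ. -/
open Finset

section Algebra
variable (x : ℕ → ℚ)

lemma dd_recursion (g : ℕ → ℚ) (U : Finset ℕ)
    (hinj : ∀ i ∈ U, ∀ j ∈ U, x i = x j → i = j)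
    {a b : ℕ} (ha : a ∈ U) (hb : b ∈ U) (hab : a ≠ b) :
    (x a - x b) * ∑ r ∈ U, g r * ∏ i ∈ U.erase r, (x r - x i)⁻¹
      = (∑ r ∈ U.erase b, g r * ∏ i ∈ (U.erase b).erase r, (x r - x i)⁻¹)
        - (∑ r ∈ U.erase a, g r * ∏ i ∈ (U.erase a).erase r, (x r - x i)⁻¹) := by
  have e1 : ∑ r ∈ U.erase b, g r * ∏ i ∈ (U.erase b).erase r, (x r - x i)⁻¹
      = ∑ r ∈ U, if r ≠ b then g r * ∏ i ∈ (U.erase b).erase r, (x r - x i)⁻¹ else 0 := by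
    rw [← Finset.sum_filter, Finset.filter_ne']
  have e2 : ∑ r ∈ U.erase a, g r * ∏ i ∈ (U.erase a).erase r, (x r - x i)⁻¹
      = ∑ r ∈ U, if r ≠ a then g r * ∏ i ∈ (U.erase a).erase r, (x r - x i)⁻¹ else 0 := by
    rw [← Finset.sum_filter, Finset.filter_ne']
  rw [e1, e2, Finset.mul_sum, ← Finset.sum_sub_distrib]
  apply Finset.sum_congr rfl
  intro r hr
  by_cases hrb : r = b
  · subst hrb
    have hrna : r ≠ a := fun h => hab (h ▸ rfl)
    have hxra : x r - x a ≠ 0 := sub_ne_zero.mpr (fun h => hrna (hinj r hr a ha h))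
    have haUb : a ∈ U.erase r := Finset.mem_erase.mpr ⟨fun h => hrna h.symm, ha⟩
    have key : (x a - x r) * (x r - x a)⁻¹ = -1 := by
      rw [← neg_sub (x r) (x a), ← neg_one_mul, mul_assoc, mul_inv_cancel₀ hxra]; ring
    rw [if_neg (fun h : r ≠ r => h rfl), ← Finset.mul_prod_erase (U.erase r) _ haUb, if_pos hrna,
      Finset.erase_right_comm (s := U) (a := r) (b := a)]
    calc (x a - x r) * (g r * ((x r - x a)⁻¹ * ∏ i ∈ (U.erase a).erase r, (x r - x i)⁻¹))
        = ((x a - x r) * (x r - x a)⁻¹) * (g r * ∏ i ∈ (U.erase a).erase r, (x r - x i)⁻¹) := by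
          ring
      _ = 0 - g r * ∏ i ∈ (U.erase a).erase r, (x r - x i)⁻¹ := by rw [key]; ring
  · by_cases hra : r = a
    · subst hra
      have hxrb : x r - x b ≠ 0 := sub_ne_zero.mpr (fun h => hrb (hinj r hr b hb h))
      have hbUr : b ∈ U.erase r := Finset.mem_erase.mpr ⟨fun h => hrb h.symm, hb⟩
      rw [if_pos hrb, if_neg (fun h : r ≠ r => h rfl),
        ← Finset.mul_prod_erase (U.erase r) _ hbUr,
        Finset.erase_right_comm (s := U) (a := r) (b := b)]
      calc (x r - x b) * (g r * ((x r - x b)⁻¹ * ∏ i ∈ (U.erase b).erase r, (x r - x i)⁻¹))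
          = ((x r - x b) * (x r - x b)⁻¹) * (g r * ∏ i ∈ (U.erase b).erase r, (x r - x i)⁻¹) := by
            ring
        _ = g r * ∏ i ∈ (U.erase b).erase r, (x r - x i)⁻¹ - 0 := by
            rw [mul_inv_cancel₀ hxrb]; ring
    · have hxra : x r - x a ≠ 0 := sub_ne_zero.mpr (fun h => hra (hinj r hr a ha h))
      have hxrb : x r - x b ≠ 0 := sub_ne_zero.mpr (fun h => hrb (hinj r hr b hb h))
      have haUr : a ∈ U.erase r := Finset.mem_erase.mpr ⟨fun h => hra h.symm, ha⟩
      have hbUra : b ∈ (U.erase r).erase a :=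
        Finset.mem_erase.mpr ⟨fun h => hab h.symm, Finset.mem_erase.mpr ⟨fun h => hrb h.symm, hb⟩⟩
      rw [if_pos hrb, if_pos hra,
        ← Finset.mul_prod_erase (U.erase r) _ haUr,
        ← Finset.mul_prod_erase ((U.erase r).erase a) _ hbUra]
      have w1 : ((U.erase b).erase r).erase a = ((U.erase r).erase a).erase b := by
        rw [Finset.erase_right_comm (s := U) (a := b) (b := r), Finset.erase_right_comm]
      have w2 : ((U.erase a).erase r).erase b = ((U.erase r).erase a).erase b := by
        rw [Finset.erase_right_comm (s := U) (a := a) (b := r)]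
      have haUbr : a ∈ (U.erase b).erase r := Finset.mem_erase.mpr ⟨fun h => hra h.symm,
        Finset.mem_erase.mpr ⟨hab, ha⟩⟩
      have hbUar : b ∈ (U.erase a).erase r := Finset.mem_erase.mpr ⟨fun h => hrb h.symm,
        Finset.mem_erase.mpr ⟨fun h => hab h.symm, hb⟩⟩
      rw [← Finset.mul_prod_erase ((U.erase b).erase r) _ haUbr,
        ← Finset.mul_prod_erase ((U.erase a).erase r) _ hbUar, w1, w2]
      have key : (x a - x b) * ((x r - x a)⁻¹ * (x r - x b)⁻¹) = (x r - x a)⁻¹ - (x r - x b)⁻¹ := by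
        field_simp
        ring
      set P := ∏ i ∈ ((U.erase r).erase a).erase b, (x r - x i)⁻¹ with hP
      calc (x a - x b) * (g r * ((x r - x a)⁻¹ * ((x r - x b)⁻¹ * P)))
          = ((x a - x b) * ((x r - x a)⁻¹ * (x r - x b)⁻¹)) * (g r * P) := by ring
        _ = ((x r - x a)⁻¹ - (x r - x b)⁻¹) * (g r * P) := by rw [key]
        _ = g r * ((x r - x a)⁻¹ * P) - g r * ((x r - x b)⁻¹ * P) := by ring

lemma lagrange_one (U : Finset ℕ) (hinj : ∀ i ∈ U, ∀ j ∈ U, x i = x j → i = j)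
    (h2 : U.card = 2) :
    ∑ r ∈ U, ∏ i ∈ U.erase r, (x r - x i)⁻¹ = 0 := by
  obtain ⟨a, b, hab, rfl⟩ := Finset.card_eq_two.mp h2
  have ha : a ∈ ({a, b} : Finset ℕ) := by simp
  have hb : b ∈ ({a, b} : Finset ℕ) := by simp
  have hxab : x a - x b ≠ 0 := sub_ne_zero.mpr (fun h => hab (hinj a ha b hb h))
  have e1 : ({a, b} : Finset ℕ).erase a = {b} := by
    rw [show ({a, b} : Finset ℕ) = insert a {b} from rfl, Finset.erase_insert (by simpa using hab)]
  have e2 : ({a, b} : Finset ℕ).erase b = {a} := by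
    rw [Finset.pair_comm, show ({b, a} : Finset ℕ) = insert b {a} from rfl,
      Finset.erase_insert (by simpa using hab.symm)]
  rw [Finset.sum_pair hab, e1, e2, Finset.prod_singleton, Finset.prod_singleton,
    ← neg_sub (x a) (x b), inv_neg]
  ring

lemma lagrange_x (U : Finset ℕ) (hinj : ∀ i ∈ U, ∀ j ∈ U, x i = x j → i = j)
    (h2 : U.card = 2) :
    ∑ r ∈ U, x r * ∏ i ∈ U.erase r, (x r - x i)⁻¹ = 1 := by
  obtain ⟨a, b, hab, rfl⟩ := Finset.card_eq_two.mp h2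
  have ha : a ∈ ({a, b} : Finset ℕ) := by simp
  have hb : b ∈ ({a, b} : Finset ℕ) := by simp
  have hxab : x a - x b ≠ 0 := sub_ne_zero.mpr (fun h => hab (hinj a ha b hb h))
  have e1 : ({a, b} : Finset ℕ).erase a = {b} := by
    rw [show ({a, b} : Finset ℕ) = insert a {b} from rfl, Finset.erase_insert (by simpa using hab)]
  have e2 : ({a, b} : Finset ℕ).erase b = {a} := by
    rw [Finset.pair_comm, show ({b, a} : Finset ℕ) = insert b {a} from rfl,
      Finset.erase_insert (by simpa using hab.symm)]
  rw [Finset.sum_pair hab, e1, e2, Finset.prod_singleton, Finset.prod_singleton,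
    ← neg_sub (x a) (x b), inv_neg]
  field_simp
  ring

lemma lagrange_one_big : ∀ (k : ℕ) (U : Finset ℕ), (∀ i ∈ U, ∀ j ∈ U, x i = x j → i = j) →
    U.card = k + 2 → ∑ r ∈ U, ∏ i ∈ U.erase r, (x r - x i)⁻¹ = 0 := by
  intro k
  induction k with
  | zero => exact fun U hinj h2 => lagrange_one x U hinj h2
  | succ m ih =>
    intro U hinj hcard
    obtain ⟨a, ha, b, hb, hab⟩ := (Finset.one_lt_card (s := U)).mp (by omega)
    have hxab : x a - x b ≠ 0 := sub_ne_zero.mpr (fun h => hab (hinj a ha b hb h))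
    have hinj' : ∀ (c : ℕ), ∀ i ∈ U.erase c, ∀ j ∈ U.erase c, x i = x j → i = j :=
      fun c i hi j hj h => hinj i (Finset.mem_of_mem_erase hi) j (Finset.mem_of_mem_erase hj) h
    have hrec := dd_recursion x (fun _ => 1) U hinj ha hb hab
    simp only [one_mul] at hrec
    have hb' : ∑ r ∈ U.erase b, ∏ i ∈ (U.erase b).erase r, (x r - x i)⁻¹ = 0 :=
      ih (U.erase b) (hinj' b) (by rw [Finset.card_erase_of_mem hb]; omega)
    have ha' : ∑ r ∈ U.erase a, ∏ i ∈ (U.erase a).erase r, (x r - x i)⁻¹ = 0 :=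
      ih (U.erase a) (hinj' a) (by rw [Finset.card_erase_of_mem ha]; omega)
    rw [hb', ha', sub_zero] at hrec
    exact (mul_eq_zero.mp hrec).resolve_left hxab

lemma lagrange_x_big : ∀ (k : ℕ) (U : Finset ℕ), (∀ i ∈ U, ∀ j ∈ U, x i = x j → i = j) →
    U.card = k + 3 → ∑ r ∈ U, x r * ∏ i ∈ U.erase r, (x r - x i)⁻¹ = 0 := by
  intro k
  induction k with
  | zero =>
    intro U hinj hcard
    obtain ⟨a, ha, b, hb, hab⟩ := (Finset.one_lt_card (s := U)).mp (by omega)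
    have hxab : x a - x b ≠ 0 := sub_ne_zero.mpr (fun h => hab (hinj a ha b hb h))
    have hinj' : ∀ (c : ℕ), ∀ i ∈ U.erase c, ∀ j ∈ U.erase c, x i = x j → i = j :=
      fun c i hi j hj h => hinj i (Finset.mem_of_mem_erase hi) j (Finset.mem_of_mem_erase hj) h
    have hrec := dd_recursion x x U hinj ha hb hab
    rw [lagrange_x x (U.erase b) (hinj' b) (by rw [Finset.card_erase_of_mem hb]; omega),
      lagrange_x x (U.erase a) (hinj' a) (by rw [Finset.card_erase_of_mem ha]; omega),
      sub_self] at hrec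
    exact (mul_eq_zero.mp hrec).resolve_left hxab
  | succ m ih =>
    intro U hinj hcard
    obtain ⟨a, ha, b, hb, hab⟩ := (Finset.one_lt_card (s := U)).mp (by omega)
    have hxab : x a - x b ≠ 0 := sub_ne_zero.mpr (fun h => hab (hinj a ha b hb h))
    have hinj' : ∀ (c : ℕ), ∀ i ∈ U.erase c, ∀ j ∈ U.erase c, x i = x j → i = j :=
      fun c i hi j hj h => hinj i (Finset.mem_of_mem_erase hi) j (Finset.mem_of_mem_erase hj) h
    have hrec := dd_recursion x x U hinj ha hb hab
    rw [ih (U.erase b) (hinj' b) (by rw [Finset.card_erase_of_mem hb]; omega),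
      ih (U.erase a) (hinj' a) (by rw [Finset.card_erase_of_mem ha]; omega),
      sub_self] at hrec
    exact (mul_eq_zero.mp hrec).resolve_left hxab

lemma pointed_swap (F : Finset ℕ → ℕ → ℚ) (s : Finset ℕ) :
    ∑ r ∈ s, ∑ T ∈ (s.erase r).powerset, F (insert r T) r
      = ∑ U ∈ s.powerset, ∑ r ∈ U, F U r := by
  rw [Finset.sum_sigma', Finset.sum_sigma']
  refine Finset.sum_nbij' (i := fun p => (⟨insert p.1 p.2, p.1⟩ : Σ _ : Finset ℕ, ℕ))
    (j := fun p => (⟨p.2, p.1.erase p.2⟩ : Σ _ : ℕ, Finset ℕ)) ?_ ?_ ?_ ?_ ?_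
  · rintro ⟨r, T⟩ hp
    simp only [Finset.mem_sigma, Finset.mem_powerset] at hp ⊢
    exact ⟨Finset.insert_subset hp.1 (hp.2.trans (Finset.erase_subset _ _)),
      Finset.mem_insert_self _ _⟩
  · rintro ⟨U, r⟩ hp
    simp only [Finset.mem_sigma, Finset.mem_powerset] at hp ⊢
    exact ⟨hp.1 hp.2, fun i hi => Finset.mem_erase.mpr
      ⟨(Finset.mem_erase.mp hi).1, hp.1 (Finset.mem_of_mem_erase hi)⟩⟩
  · rintro ⟨r, T⟩ hp
    simp only [Finset.mem_sigma, Finset.mem_powerset] at hp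
    have hrT : r ∉ T := fun h => (Finset.mem_erase.mp (hp.2 h)).1 rfl
    simp [Finset.erase_insert hrT]
  · rintro ⟨U, r⟩ hp
    simp only [Finset.mem_sigma, Finset.mem_powerset] at hp
    simp [Finset.insert_erase hp.2]
  · rintro ⟨r, T⟩ hp
    rfl

lemma core_identity (s : Finset ℕ) (hinj : ∀ i ∈ s, ∀ j ∈ s, x i = x j → i = j) (c : ℚ) :
    ∑ r ∈ s, (x r + c) * ∏ i ∈ s.erase r, ((x r - x i - 1) / (x r - x i))
      = (∑ r ∈ s, (x r + c)) - (s.card.choose 2 : ℚ) := by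
  set F : Finset ℕ → ℕ → ℚ :=
    fun U r => (x r + c) * ((-1 : ℚ)^(U.card - 1) * ∏ i ∈ U.erase r, (x r - x i)⁻¹) with hF
  have step1 : ∑ r ∈ s, (x r + c) * ∏ i ∈ s.erase r, ((x r - x i - 1) / (x r - x i))
      = ∑ r ∈ s, ∑ T ∈ (s.erase r).powerset, F (insert r T) r := by
    apply Finset.sum_congr rfl
    intro r hr
    have hfac : ∀ i ∈ s.erase r, (x r - x i - 1) / (x r - x i) = -(x r - x i)⁻¹ + 1 := by
      intro i hi
      have hne : x r - x i ≠ 0 := sub_ne_zero.mpr (fun h => (Finset.mem_erase.mp hi).1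
        (hinj i (Finset.mem_of_mem_erase hi) r hr h.symm))
      rw [sub_div, div_self hne, one_div]
      ring
    rw [Finset.prod_congr rfl hfac, Finset.prod_add, Finset.mul_sum]
    apply Finset.sum_congr rfl
    intro T hT
    simp only [Finset.mem_powerset] at hT
    have hrT : r ∉ T := fun h => (Finset.mem_erase.mp (hT h)).1 rfl
    have h1 : ∏ i ∈ (s.erase r) \ T, (1 : ℚ) = 1 := Finset.prod_const_one
    have h2 : ∏ i ∈ T, (-(x r - x i)⁻¹) = (-1 : ℚ)^T.card * ∏ i ∈ T, (x r - x i)⁻¹ := by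
      rw [← Finset.prod_const (-1 : ℚ), ← Finset.prod_mul_distrib]
      apply Finset.prod_congr rfl
      intro i _; ring
    rw [h1, mul_one, h2, hF]
    simp only [Finset.card_insert_of_notMem hrT, Nat.add_sub_cancel,
      Finset.erase_insert hrT]
  rw [step1, pointed_swap F s, Finset.sum_powerset]
  have hval : ∀ j ∈ Finset.range (s.card + 1),
      (∑ U ∈ s.powersetCard j, ∑ r ∈ U, F U r)
        = (if j = 1 then (∑ r ∈ s, (x r + c)) else 0)
          + (if j = 2 then -(s.card.choose 2 : ℚ) else 0) := by
    intro j hj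
    by_cases hj1 : j = 1
    · subst hj1
      rw [if_pos rfl, if_neg (by omega)]
      rw [Finset.powersetCard_one, Finset.sum_map, add_zero]
      apply Finset.sum_congr rfl
      intro a ha
      simp [hF]
    · by_cases hj2 : j = 2
      · subst hj2
        rw [if_neg hj1, if_pos rfl, zero_add]
        have : ∀ U ∈ s.powersetCard 2, (∑ r ∈ U, F U r) = -1 := by
          intro U hU
          obtain ⟨hUs, hUc⟩ := Finset.mem_powersetCard.mp hU
          have hinjU : ∀ i ∈ U, ∀ j ∈ U, x i = x j → i = j :=
            fun i hi j hj h => hinj i (hUs hi) j (hUs hj) h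
          have expand : (∑ r ∈ U, F U r)
              = (-1 : ℚ)^(U.card - 1) * ((∑ r ∈ U, x r * ∏ i ∈ U.erase r, (x r - x i)⁻¹)
                + c * ∑ r ∈ U, ∏ i ∈ U.erase r, (x r - x i)⁻¹) := by
            simp only [mul_add, Finset.mul_sum, ← Finset.sum_add_distrib]
            apply Finset.sum_congr rfl
            intro r _; rw [hF]; ring
          rw [expand, lagrange_x x U hinjU hUc, lagrange_one x U hinjU hUc, hUc]
          norm_num
        rw [Finset.sum_congr rfl this, Finset.sum_const, Finset.card_powersetCard]
        simp
      · rw [if_neg hj1, if_neg hj2, add_zero]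
        apply Finset.sum_eq_zero
        intro U hU
        obtain ⟨hUs, hUc⟩ := Finset.mem_powersetCard.mp hU
        by_cases hj0 : j = 0
        · subst hj0
          rw [Finset.card_eq_zero.mp hUc]
          simp
        · -- j ≥ 3
          have hinjU : ∀ i ∈ U, ∀ j ∈ U, x i = x j → i = j :=
            fun i hi j hj h => hinj i (hUs hi) j (hUs hj) h
          have expand : (∑ r ∈ U, F U r)
              = (-1 : ℚ)^(U.card - 1) * ((∑ r ∈ U, x r * ∏ i ∈ U.erase r, (x r - x i)⁻¹)
                + c * ∑ r ∈ U, ∏ i ∈ U.erase r, (x r - x i)⁻¹) := by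
            simp only [mul_add, Finset.mul_sum, ← Finset.sum_add_distrib]
            apply Finset.sum_congr rfl
            intro r _; rw [hF]; ring
          have hj3 : 3 ≤ j := by omega
          rw [expand, lagrange_x_big x (j - 3) U hinjU (by omega),
            lagrange_one_big x (j - 2) U hinjU (by omega)]
          ring
  rw [Finset.sum_congr rfl hval, Finset.sum_add_distrib]
  have h1 : ∑ j ∈ Finset.range (s.card + 1), (if j = 1 then (∑ r ∈ s, (x r + c)) else 0)
      = ∑ r ∈ s, (x r + c) := by
    rw [Finset.sum_ite_eq' (Finset.range (s.card + 1)) 1 (fun _ => ∑ r ∈ s, (x r + c))]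
    by_cases h : 1 ∈ Finset.range (s.card + 1)
    · rw [if_pos h]
    · rw [if_neg h]
      have : s.card = 0 := by rw [Finset.mem_range] at h; omega
      rw [Finset.card_eq_zero.mp this]
      simp
  have h2 : ∑ j ∈ Finset.range (s.card + 1), (if j = 2 then -(s.card.choose 2 : ℚ) else 0)
      = -(s.card.choose 2 : ℚ) := by
    rw [Finset.sum_ite_eq' (Finset.range (s.card + 1)) 2 (fun _ => -(s.card.choose 2 : ℚ))]
    by_cases h : 2 ∈ Finset.range (s.card + 1)
    · rw [if_pos h]
    · rw [if_neg h]
      have : s.card ≤ 1 := by rw [Finset.mem_range] at h; omega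
      rcases Nat.le_one_iff_eq_zero_or_eq_one.mp this with h0 | h0 <;> rw [h0] <;> simp
  rw [h1, h2]
  ring

section Comb
variable {f : ℕ → ℕ} {L : ℕ}

lemma f_anti (hf : IsPartitionFun f L) : ∀ i j, 1 ≤ i → i ≤ j → f j ≤ f i := by
  intro i j hi hij
  induction j with
  | zero => omega
  | succ m ih =>
    rcases Nat.lt_or_ge i (m+1) with h | h
    · exact le_trans (hf.1 m (by omega)) (ih (by omega))
    · have : i = m + 1 := by omega
      subst this; exact le_refl _

lemma conj_anti (j j' : ℕ) (h : j ≤ j') : conj f L j' ≤ conj f L j := by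
  apply Finset.card_le_card
  intro i hi
  simp only [Finset.mem_filter] at hi ⊢
  exact ⟨hi.1, le_trans h hi.2⟩

lemma conj_le_L (j : ℕ) : conj f L j ≤ L := by
  have : conj f L j ≤ (Finset.Icc 1 L).card := Finset.card_le_card (Finset.filter_subset _ _)
  simpa using this

lemma le_conj (hf : IsPartitionFun f L) (r j : ℕ) (hr : 1 ≤ r) (hrL : r ≤ L) (hj : j ≤ f r) :
    r ≤ conj f L j := by
  have hsub : Finset.Icc 1 r ⊆ (Finset.Icc 1 L).filter fun i => j ≤ f i := by
    intro i hi
    simp only [Finset.mem_Icc] at hi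
    simp only [Finset.mem_filter, Finset.mem_Icc]
    exact ⟨⟨hi.1, le_trans hi.2 hrL⟩, le_trans hj (f_anti hf i r hi.1 hi.2)⟩
  have := Finset.card_le_card hsub
  simpa [conj] using this

lemma conj_lt (hf : IsPartitionFun f L) (i j : ℕ) (hi : 1 ≤ i) (hj : f i < j) :
    conj f L j ≤ i - 1 := by
  have hsub : (Finset.Icc 1 L).filter (fun i' => j ≤ f i') ⊆ Finset.Icc 1 (i-1) := by
    intro i' hi'
    simp only [Finset.mem_filter, Finset.mem_Icc] at hi'
    simp only [Finset.mem_Icc]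
    refine ⟨hi'.1.1, ?_⟩
    by_contra h
    have : i ≤ i' := by omega
    have := f_anti hf i i' hi this
    omega
  have := Finset.card_le_card hsub
  simpa [conj] using this

lemma conj_corner (hf : IsPartitionFun f L) (r : ℕ) (hr : 1 ≤ r) (hrL : r ≤ L)
    (hc : f (r+1) < f r) : conj f L (f r) = r := by
  have h1 : (Finset.Icc 1 L).filter (fun i => f r ≤ f i) = Finset.Icc 1 r := by
    ext i
    simp only [Finset.mem_filter, Finset.mem_Icc]
    constructor
    · rintro ⟨⟨h1, h2⟩, h3⟩
      refine ⟨h1, ?_⟩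
      by_contra h
      have : r + 1 ≤ i := by omega
      have := f_anti hf (r+1) i (by omega) this
      omega
    · rintro ⟨h1, h2⟩
      exact ⟨⟨h1, le_trans h2 hrL⟩, f_anti hf i r h1 h2⟩
  rw [conj, h1]
  simp

lemma cells_card (hf : IsPartitionFun f L) : (cells f L).card = ∑ i ∈ Finset.Icc 1 L, f i := by
  rw [cells, Finset.card_eq_sum_card_fiberwise
    (f := fun p => p.1) (t := Finset.Icc 1 L)
    (fun p hp => by simp only [Finset.mem_coe, Finset.mem_filter, Finset.mem_product] at hp; exact hp.1.1)]
  apply Finset.sum_congr rfl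
  intro i hi
  simp only [Finset.mem_Icc] at hi
  have : ((Finset.Icc 1 L ×ˢ Finset.Icc 1 (f 1)).filter (fun p => p.2 ≤ f p.1)).filter
      (fun p => p.1 = i) = (Finset.Icc 1 (f i)).image (fun j => (i, j)) := by
    ext p
    simp only [Finset.mem_filter, Finset.mem_product, Finset.mem_Icc, Finset.mem_image]
    constructor
    · rintro ⟨⟨⟨h1, h2⟩, h3⟩, h4⟩
      exact ⟨p.2, ⟨by omega, by rw [← h4]; exact h3⟩, by rw [← h4]⟩
    · rintro ⟨j, ⟨hj1, hj2⟩, rfl⟩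
      have hfi : f i ≤ f 1 := f_anti hf 1 i le_rfl hi.1
      exact ⟨⟨⟨hi, by omega⟩, by simpa using hj2⟩, rfl⟩
  rw [this, Finset.card_image_of_injective _ (fun a b h => by simpa using h)]
  simp

lemma corners_eq (hf : IsPartitionFun f L) :
    corners f L = ((Finset.Icc 1 L).filter (fun r => f (r+1) < f r)).image
      (fun r => (r, f r)) := by
  ext p
  simp only [corners, cells, Finset.mem_filter, Finset.mem_product, Finset.mem_Icc,
    Finset.mem_image]
  constructor
  · rintro ⟨⟨⟨h1, h2⟩, h3⟩, h4, h5⟩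
    exact ⟨p.1, ⟨h1, by omega⟩, by rw [Prod.ext_iff]; exact ⟨rfl, h4.symm⟩⟩
  · rintro ⟨r, ⟨⟨hr1, hrL⟩, hc⟩, rfl⟩
    have hfr1 : f r ≤ f 1 := f_anti hf 1 r le_rfl hr1
    exact ⟨⟨⟨⟨hr1, hrL⟩, by omega⟩, le_refl _⟩, rfl, hc⟩

lemma hook_row_cast (hf : IsPartitionFun f L) (r j : ℕ) (hr1 : 1 ≤ r) (hrL : r ≤ L)
    (hj1 : 1 ≤ j) (hj2 : j ≤ f r) :
    (hook f L r j : ℤ) = (f r : ℤ) - j + (conj f L j : ℤ) - r + 1 := by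
  have h1 : r ≤ conj f L j := le_conj hf r j hr1 hrL hj2
  simp only [hook]
  omega

lemma tele : ∀ (K : ℕ), 1 ≤ K →
    ∏ v ∈ Finset.Icc (2:ℤ) (K:ℤ), ((v:ℚ) / ((v:ℚ) - 1)) = (K:ℚ) := by
  intro K
  induction K with
  | zero => omega
  | succ m ih =>
    intro _
    rcases Nat.eq_zero_or_pos m with hm | hm
    · subst hm
      have : Finset.Icc (2:ℤ) ((1:ℕ):ℤ) = ∅ := by
        apply Finset.Icc_eq_empty; norm_num
      rw [this]; simp
    · have hcast : ((m+1:ℕ):ℤ) = (m:ℤ) + 1 := by push_cast; ring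
      have hins : Finset.Icc (2:ℤ) ((m:ℤ)+1) = insert ((m:ℤ)+1) (Finset.Icc (2:ℤ) (m:ℤ)) := by
        ext v
        simp only [Finset.mem_Icc, Finset.mem_insert]
        omega
      have hnm : ((m:ℤ)+1) ∉ Finset.Icc (2:ℤ) (m:ℤ) := by
        simp only [Finset.mem_Icc]; omega
      rw [hcast, hins, Finset.prod_insert hnm, ih hm]
      have hm0 : (m:ℚ) ≠ 0 := by positivity
      push_cast
      field_simp
      simp [hm0]

lemma row_partition (hf : IsPartitionFun f L) (r : ℕ) (hr1 : 1 ≤ r) (hrL : r ≤ L)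
    (hc : f (r+1) < f r) :
    (((Finset.Icc 1 (f r - 1)).image (fun j => (hook f L r j : ℤ)))
      ∪ ((Finset.Icc (r+1) L).image (fun i => ((f r : ℤ) - r) - ((f i : ℤ) - i)))
      = Finset.Icc (2:ℤ) ((f r : ℤ) + L - r))
    ∧ Disjoint ((Finset.Icc 1 (f r - 1)).image (fun j => (hook f L r j : ℤ)))
        ((Finset.Icc (r+1) L).image (fun i => ((f r : ℤ) - r) - ((f i : ℤ) - i))) := by
  set A := (Finset.Icc 1 (f r - 1)).image (fun j => (hook f L r j : ℤ)) with hA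
  set B := (Finset.Icc (r+1) L).image (fun i => ((f r : ℤ) - r) - ((f i : ℤ) - i)) with hB
  have hfr : 1 ≤ f r := by omega
  have hAsub : A ⊆ Finset.Icc (2:ℤ) ((f r : ℤ) + L - r) := by
    intro v hv
    rw [hA, Finset.mem_image] at hv
    obtain ⟨j, hj, rfl⟩ := hv
    rw [Finset.mem_Icc] at hj
    have hcast := hook_row_cast hf r j hr1 hrL hj.1 (by omega)
    have h1 : r ≤ conj f L j := le_conj hf r j hr1 hrL (by omega)
    have h2 : conj f L j ≤ L := conj_le_L j
    rw [Finset.mem_Icc]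
    omega
  have hBsub : B ⊆ Finset.Icc (2:ℤ) ((f r : ℤ) + L - r) := by
    intro v hv
    rw [hB, Finset.mem_image] at hv
    obtain ⟨i, hi, rfl⟩ := hv
    rw [Finset.mem_Icc] at hi
    have h1 : f i ≤ f (r+1) := f_anti hf (r+1) i (by omega) hi.1
    rw [Finset.mem_Icc]
    omega
  have hdisj : Disjoint A B := by
    rw [Finset.disjoint_left]
    intro v hvA hvB
    rw [hA, Finset.mem_image] at hvA
    rw [hB, Finset.mem_image] at hvB
    obtain ⟨j, hj, hjv⟩ := hvA
    obtain ⟨i, hi, hiv⟩ := hvB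
    rw [Finset.mem_Icc] at hj hi
    have hjv' : (hook f L r j : ℤ) = v := hjv
    have hiv' : ((f r : ℤ) - r) - ((f i : ℤ) - i) = v := hiv
    have hcast := hook_row_cast hf r j hr1 hrL hj.1 (by omega)
    rcases le_or_gt j (f i) with hji | hji
    · have h1 : i ≤ conj f L j := le_conj hf i j (by omega) hi.2 hji
      omega
    · have h1 : conj f L j ≤ i - 1 := conj_lt hf i j (by omega) hji
      omega
  have hAcard : A.card = f r - 1 := by
    rw [hA, Finset.card_image_of_injOn, Nat.card_Icc]
    · omega
    · intro j hj j' hj' heq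
      simp only [Finset.coe_Icc, Set.mem_Icc] at hj hj'
      have e1 := hook_row_cast hf r j hr1 hrL hj.1 (by omega)
      have e2 := hook_row_cast hf r j' hr1 hrL hj'.1 (by omega)
      have heq' : (hook f L r j : ℤ) = (hook f L r j' : ℤ) := heq
      rcases le_total j j' with h | h
      · have := conj_anti (f := f) (L := L) j j' h
        omega
      · have := conj_anti (f := f) (L := L) j' j h
        omega
  have hBcard : B.card = L - r := by
    rw [hB, Finset.card_image_of_injOn, Nat.card_Icc]
    · omega
    · intro i hi i' hi' heq
      simp only [Finset.coe_Icc, Set.mem_Icc] at hi hi'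
      have heq' : (f r : ℤ) - r - ((f i : ℤ) - i) = (f r : ℤ) - r - ((f i' : ℤ) - i') := heq
      rcases le_total i i' with h | h
      · have := f_anti hf i i' (by omega) h
        omega
      · have := f_anti hf i' i (by omega) h
        omega
  have hunion : A ∪ B = Finset.Icc (2:ℤ) ((f r : ℤ) + L - r) := by
    apply Finset.eq_of_subset_of_card_le (Finset.union_subset hAsub hBsub)
    rw [Finset.card_union_of_disjoint hdisj, hAcard, hBcard, Int.card_Icc]
    omega
  exact ⟨hunion, hdisj⟩

lemma row_prod (hf : IsPartitionFun f L) (r : ℕ) (hr1 : 1 ≤ r) (hrL : r ≤ L)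
    (hc : f (r+1) < f r) :
    ∏ j ∈ Finset.Icc 1 (f r - 1), (hook f L r j : ℚ) / ((hook f L r j : ℚ) - 1)
      = ((f r : ℚ) - r + L) *
        ∏ i ∈ Finset.Icc (r+1) L,
          ((((f r : ℚ) - r) - ((f i : ℚ) - i)) - 1) / (((f r : ℚ) - r) - ((f i : ℚ) - i)) := by
  obtain ⟨hunion, hdisj⟩ := row_partition hf r hr1 hrL hc
  set g : ℤ → ℚ := fun v => (v:ℚ)/((v:ℚ)-1) with hg
  have hfr : 1 ≤ f r := by omega
  have hAinj : ∀ j ∈ Finset.Icc 1 (f r - 1), ∀ j' ∈ Finset.Icc 1 (f r - 1),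
      (hook f L r j : ℤ) = (hook f L r j' : ℤ) → j = j' := by
    intro j hj j' hj' heq
    rw [Finset.mem_Icc] at hj hj'
    have e1 := hook_row_cast hf r j hr1 hrL hj.1 (by omega)
    have e2 := hook_row_cast hf r j' hr1 hrL hj'.1 (by omega)
    rcases le_total j j' with h | h
    · have := conj_anti (f := f) (L := L) j j' h
      omega
    · have := conj_anti (f := f) (L := L) j' j h
      omega
  have hBinj : ∀ i ∈ Finset.Icc (r+1) L, ∀ i' ∈ Finset.Icc (r+1) L,
      ((f r : ℤ) - r) - ((f i : ℤ) - i) = ((f r : ℤ) - r) - ((f i' : ℤ) - i') → i = i' := by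
    intro i hi i' hi' heq
    rw [Finset.mem_Icc] at hi hi'
    rcases le_total i i' with h | h
    · have := f_anti hf i i' (by omega) h
      omega
    · have := f_anti hf i' i (by omega) h
      omega
  have hA : ∏ j ∈ Finset.Icc 1 (f r - 1), (hook f L r j : ℚ) / ((hook f L r j : ℚ) - 1)
      = ∏ v ∈ (Finset.Icc 1 (f r - 1)).image (fun j => (hook f L r j : ℤ)), g v := by
    rw [Finset.prod_image hAinj]
    apply Finset.prod_congr rfl
    intro j _
    rw [hg]
    push_cast
    rfl
  have hB : ∏ v ∈ (Finset.Icc (r+1) L).image (fun i => ((f r : ℤ) - r) - ((f i : ℤ) - i)), g v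
      = ∏ i ∈ Finset.Icc (r+1) L,
          (((f r : ℚ) - r) - ((f i : ℚ) - i)) / ((((f r : ℚ) - r) - ((f i : ℚ) - i)) - 1) := by
    rw [Finset.prod_image hBinj]
    apply Finset.prod_congr rfl
    intro i _
    rw [hg]
    push_cast
    rfl
  have hBne : ∀ i ∈ Finset.Icc (r+1) L,
      (((f r : ℚ) - r) - ((f i : ℚ) - i)) / ((((f r : ℚ) - r) - ((f i : ℚ) - i)) - 1) ≠ 0 := by
    intro i hi
    rw [Finset.mem_Icc] at hi
    have h1 : f i ≤ f (r+1) := f_anti hf (r+1) i (by omega) hi.1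
    have h2 : (2:ℤ) ≤ ((f r : ℤ) - r) - ((f i : ℤ) - i) := by omega
    have h2' : (2:ℚ) ≤ ((f r : ℚ) - r) - ((f i : ℚ) - i) := by exact_mod_cast h2
    exact div_ne_zero (by intro hcon; linarith) (by intro hcon; linarith)
  set K₀ : ℕ := f r + (L - r) with hK₀
  have hKcast : ((K₀ : ℕ) : ℤ) = (f r : ℤ) + L - r := by omega
  have htele : ∏ v ∈ Finset.Icc (2:ℤ) ((f r : ℤ) + L - r), g v = (K₀ : ℚ) := by
    rw [← hKcast]
    exact tele K₀ (by omega)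
  have hKQ : ((K₀ : ℕ) : ℚ) = (f r : ℚ) - r + L := by
    rw [hK₀]
    push_cast [Nat.cast_sub hrL]
    ring
  have hprod : (∏ j ∈ Finset.Icc 1 (f r - 1), (hook f L r j : ℚ) / ((hook f L r j : ℚ) - 1))
      * ∏ i ∈ Finset.Icc (r+1) L,
          (((f r : ℚ) - r) - ((f i : ℚ) - i)) / ((((f r : ℚ) - r) - ((f i : ℚ) - i)) - 1)
      = (f r : ℚ) - r + L := by
    rw [hA, ← hB, ← Finset.prod_union hdisj, hunion, htele, hKQ]
  have hBne' : (∏ i ∈ Finset.Icc (r+1) L,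
      (((f r : ℚ) - r) - ((f i : ℚ) - i)) / ((((f r : ℚ) - r) - ((f i : ℚ) - i)) - 1)) ≠ 0 :=
    Finset.prod_ne_zero_iff.mpr hBne
  rw [← eq_div_iff hBne'] at hprod
  rw [hprod, div_eq_mul_inv, ← Finset.prod_inv_distrib]
  congr 1
  apply Finset.prod_congr rfl
  intro i _
  rw [inv_div]

lemma col_prod (hf : IsPartitionFun f L) (r : ℕ) (hr1 : 1 ≤ r) (hrL : r ≤ L)
    (hc : f (r+1) < f r) :
    ∏ i ∈ Finset.Icc 1 (r-1), (hook f L i (f r) : ℚ) / ((hook f L i (f r) : ℚ) - 1)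
      = ∏ i ∈ Finset.Icc 1 (r-1),
          ((((f r : ℚ) - r) - ((f i : ℚ) - i)) - 1) / (((f r : ℚ) - r) - ((f i : ℚ) - i)) := by
  apply Finset.prod_congr rfl
  intro i hi
  rw [Finset.mem_Icc] at hi
  have hconj : conj f L (f r) = r := conj_corner hf r hr1 hrL hc
  have hfi : f r ≤ f i := f_anti hf i r hi.1 (by omega)
  have hcast : (hook f L i (f r) : ℤ) = (f i : ℤ) - f r + r - i + 1 := by
    simp only [hook, hconj]
    omega
  have hcastQ : (hook f L i (f r) : ℚ) = ((f i : ℚ) - i) - ((f r : ℚ) - r) + 1 := by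
    have h2 : ((hook f L i (f r) : ℤ) : ℚ) = (((f i : ℤ) - f r + r - i + 1 : ℤ) : ℚ) := by
      rw [hcast]
    push_cast at h2
    rw [h2]
    ring
  have hpos : (1:ℤ) ≤ (f i : ℤ) - i - ((f r : ℤ) - r) := by omega
  have hposQ : (1:ℚ) ≤ ((f i : ℚ) - i) - ((f r : ℚ) - r) := by exact_mod_cast hpos
  have hne : ((f i : ℚ) - i) - ((f r : ℚ) - r) ≠ 0 := by intro h; rw [h] at hposQ; norm_num at hposQ
  have hne2 : ((f r : ℚ) - r) - ((f i : ℚ) - i) ≠ 0 := by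
    intro h
    apply hne
    linarith
  rw [hcastQ]
  rw [show ((f i : ℚ) - i) - ((f r : ℚ) - r) + 1 - 1 = ((f i : ℚ) - i) - ((f r : ℚ) - r) by ring]
  rw [div_eq_div_iff hne hne2]
  ring

lemma sumLr : ∀ (M : ℕ), ∑ r ∈ Finset.Icc 1 M, ((M:ℚ) - r) = (M.choose 2 : ℚ) := by
  intro M
  induction M with
  | zero => simp
  | succ m ih =>
    rw [Finset.sum_Icc_succ_top (by omega)]
    have h1 : ∑ r ∈ Finset.Icc 1 m, (((m+1:ℕ):ℚ) - r)
        = (∑ r ∈ Finset.Icc 1 m, ((m:ℚ) - r)) + m := by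
      have : ∀ r ∈ Finset.Icc 1 m, (((m+1:ℕ):ℚ) - r) = ((m:ℚ) - r) + 1 := by
        intro r _
        push_cast
        ring
      rw [Finset.sum_congr rfl this, Finset.sum_add_distrib, Finset.sum_const, Nat.card_Icc]
      simp
    rw [h1, ih]
    have h2 : (m+1).choose 2 = m.choose 2 + m := by
      rw [Nat.choose_succ_succ]
      simp [Nat.choose_one_right]
      omega
    rw [h2]
    push_cast
    ring

end Comb

/-- **Branching rule for hook lengths.** -/
theorem hook_branching_rule (f : ℕ → ℕ) (L n : ℕ) (hf : IsPartitionFun f L)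
    (hn : (cells f L).card = n) (hpos : 0 < n) :
    ∑ c ∈ corners f L, (1 / (n : ℚ)) *
      (∏ i ∈ Finset.Icc 1 (c.1 - 1), (hook f L i c.2 : ℚ) / ((hook f L i c.2 : ℚ) - 1)) *
      (∏ j ∈ Finset.Icc 1 (c.2 - 1), (hook f L c.1 j : ℚ) / ((hook f L c.1 j : ℚ) - 1)) = 1 := by
  have hnQ : (n:ℚ) ≠ 0 := Nat.cast_ne_zero.mpr (by omega)
  have h0 : (∑ c ∈ corners f L, (1 / (n : ℚ)) *
      (∏ i ∈ Finset.Icc 1 (c.1 - 1), (hook f L i c.2 : ℚ) / ((hook f L i c.2 : ℚ) - 1)) *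
      (∏ j ∈ Finset.Icc 1 (c.2 - 1), (hook f L c.1 j : ℚ) / ((hook f L c.1 j : ℚ) - 1)))
      = ∑ r ∈ (Finset.Icc 1 L).filter (fun r => f (r+1) < f r), (1 / (n : ℚ)) *
        (∏ i ∈ Finset.Icc 1 (r - 1), (hook f L i (f r) : ℚ) / ((hook f L i (f r) : ℚ) - 1)) *
        (∏ j ∈ Finset.Icc 1 (f r - 1), (hook f L r j : ℚ) / ((hook f L r j : ℚ) - 1)) := by
    rw [corners_eq hf, Finset.sum_image (fun a _ b _ h => (Prod.ext_iff.mp h).1)]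
  rw [h0]
  have hterm : ∀ r ∈ (Finset.Icc 1 L).filter (fun r => f (r+1) < f r),
      (1 / (n : ℚ)) *
        (∏ i ∈ Finset.Icc 1 (r - 1), (hook f L i (f r) : ℚ) / ((hook f L i (f r) : ℚ) - 1)) *
        (∏ j ∈ Finset.Icc 1 (f r - 1), (hook f L r j : ℚ) / ((hook f L r j : ℚ) - 1))
      = (1 / (n : ℚ)) * ((((f r : ℚ) - r) + (L:ℚ)) * ∏ i ∈ (Finset.Icc 1 L).erase r,
          ((((f r : ℚ) - r) - ((f i : ℚ) - i) - 1) / (((f r : ℚ) - r) - ((f i : ℚ) - i)))) := by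
    intro r hr
    simp only [Finset.mem_filter, Finset.mem_Icc] at hr
    obtain ⟨⟨hr1, hrL⟩, hc⟩ := hr
    rw [col_prod hf r hr1 hrL hc, row_prod hf r hr1 hrL hc]
    have hsplit : (Finset.Icc 1 L).erase r = Finset.Icc 1 (r-1) ∪ Finset.Icc (r+1) L := by
      ext a
      simp only [Finset.mem_erase, Finset.mem_Icc, Finset.mem_union]
      omega
    have hdisj2 : Disjoint (Finset.Icc 1 (r-1)) (Finset.Icc (r+1) L) := by
      rw [Finset.disjoint_left]
      intro a ha hb
      rw [Finset.mem_Icc] at ha hb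
      omega
    rw [hsplit, Finset.prod_union hdisj2]
    ring
  rw [Finset.sum_congr rfl hterm]
  have hzero : ∀ r ∈ Finset.Icc 1 L, r ∉ (Finset.Icc 1 L).filter (fun r => f (r+1) < f r) →
      (1 / (n : ℚ)) * ((((f r : ℚ) - r) + (L:ℚ)) * ∏ i ∈ (Finset.Icc 1 L).erase r,
          ((((f r : ℚ) - r) - ((f i : ℚ) - i) - 1) / (((f r : ℚ) - r) - ((f i : ℚ) - i)))) = 0 := by
    intro r hrt hrs
    rw [Finset.mem_Icc] at hrt
    simp only [Finset.mem_filter, Finset.mem_Icc, not_and, not_lt] at hrs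
    have hge : f r ≤ f (r+1) := hrs ⟨hrt.1, hrt.2⟩
    by_cases hrL' : r = L
    · have hfL1 : f (L+1) = 0 := hf.2 _ (by omega)
      have hfr0 : f r = 0 := by subst hrL'; omega
      have hz : ((f r : ℚ) - r) + (L:ℚ) = 0 := by
        rw [hfr0, hrL']
        push_cast
        ring
      rw [hz]
      ring
    · have hmem : r + 1 ∈ (Finset.Icc 1 L).erase r := by
        simp only [Finset.mem_erase, Finset.mem_Icc]
        omega
      have hfeq : f (r+1) = f r := le_antisymm (hf.1 r hrt.1) hge
      have hz : (((f r : ℚ) - r) - ((f (r+1) : ℚ) - ((r+1:ℕ):ℚ)) - 1)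
          / (((f r : ℚ) - r) - ((f (r+1) : ℚ) - ((r+1:ℕ):ℚ))) = 0 := by
        have : ((f r : ℚ) - r) - ((f (r+1) : ℚ) - ((r+1:ℕ):ℚ)) - 1 = 0 := by
          rw [hfeq]
          push_cast
          ring
        rw [this, zero_div]
      rw [Finset.prod_eq_zero hmem hz]
      ring
  rw [Finset.sum_subset (Finset.filter_subset _ _) hzero]
  have hinj : ∀ i ∈ Finset.Icc 1 L, ∀ j ∈ Finset.Icc 1 L,
      ((f i : ℚ) - i) = ((f j : ℚ) - j) → i = j := by
    intro i hi j hj h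
    rw [Finset.mem_Icc] at hi hj
    have h' : (f i : ℚ) + j = (f j : ℚ) + i := by linarith
    have h'' : f i + j = f j + i := by exact_mod_cast h'
    rcases le_total i j with hle | hle
    · have := f_anti hf i j hi.1 hle
      omega
    · have := f_anti hf j i hj.1 hle
      omega
  have hcore : ∑ r ∈ Finset.Icc 1 L, (((f r : ℚ) - r) + (L:ℚ)) *
      ∏ i ∈ (Finset.Icc 1 L).erase r,
        ((((f r : ℚ) - r) - ((f i : ℚ) - i) - 1) / (((f r : ℚ) - r) - ((f i : ℚ) - i)))
      = (∑ r ∈ Finset.Icc 1 L, (((f r : ℚ) - r) + (L:ℚ)))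
        - ((Finset.Icc 1 L).card.choose 2 : ℚ) :=
    core_identity (fun i => (f i : ℚ) - i) (Finset.Icc 1 L) hinj (L:ℚ)
  have hgather : ∑ r ∈ Finset.Icc 1 L, (1 / (n : ℚ)) * ((((f r : ℚ) - r) + (L:ℚ)) *
      ∏ i ∈ (Finset.Icc 1 L).erase r,
        ((((f r : ℚ) - r) - ((f i : ℚ) - i) - 1) / (((f r : ℚ) - r) - ((f i : ℚ) - i))))
      = (1 / (n : ℚ)) * ∑ r ∈ Finset.Icc 1 L, ((((f r : ℚ) - r) + (L:ℚ)) *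
      ∏ i ∈ (Finset.Icc 1 L).erase r,
        ((((f r : ℚ) - r) - ((f i : ℚ) - i) - 1) / (((f r : ℚ) - r) - ((f i : ℚ) - i)))) := by
    rw [Finset.mul_sum]
  rw [hgather, hcore]
  have hcard : (Finset.Icc 1 L).card = L := by
    rw [Nat.card_Icc]
    omega
  have hcells : (n:ℚ) = ∑ i ∈ Finset.Icc 1 L, (f i : ℚ) := by
    rw [← hn, cells_card hf]
    push_cast
    rfl
  have hS : ∑ r ∈ Finset.Icc 1 L, (((f r : ℚ) - r) + (L:ℚ))
      = (n:ℚ) + (L.choose 2 : ℚ) := by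
    have hcg : ∀ r ∈ Finset.Icc 1 L, (((f r : ℚ) - r) + (L:ℚ)) = (f r : ℚ) + ((L:ℚ) - r) := by
      intro r _
      ring
    rw [Finset.sum_congr rfl hcg, Finset.sum_add_distrib, ← hcells, sumLr L]
  rw [hcard, hS]
  field_simp
  ring
end Algebra
end

section
/- Complementary weighted branching rule (CWBR): For any partition λ and commuting variables x_1,…,x_{ℓ(λ)}, y_1,…,y_{λ_1}, one has ∏_{(i,j)∈[λ]} (x_i + ⋯ + x_{λ'_j} + y_j + ⋯ + y_{λ_i}) = Σ_{(r,s)∈C'[λ]} [∏_{(i,j)∈[λ], i≠r, j≠s} (x_i + ⋯ + x_{λ'_j} + y_j + ⋯ + y_{λ_i})] · [∏_{i=1}^{r−1} (x_{i+1} + ⋯ + x_{r−1} + y_s + ⋯ + y_{λ_i})] · [∏_{j=1}^{s−1} (x_r + ⋯ + x_{λ'_j} + y_{j+1} + ⋯ + y_{s−1})], as an identity of polynomials in the x_i and y_j. -/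
open Finset

open Polynomial


-- L2: Lagrange leading coefficient identity
lemma lagrange_sum_eq_one {F : Type*} [Field F] {ι : Type*} [DecidableEq ι]
    (s : Finset ι) (v : ι → F) (hvs : Set.InjOn v s) (T : Finset ℕ) (z : ℕ → F)
    (hcard : T.card + 1 = s.card) :
    ∑ i ∈ s, (∏ t ∈ T, (v i - z t)) / (∏ j ∈ s.erase i, (v i - v j)) = 1 := by
  classical
  set f : F[X] := ∏ t ∈ T, (X - C (z t)) with hfdef
  have hmonic : f.Monic := monic_prod_of_monic _ _ fun t _ => monic_X_sub_C (z t)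
  have hdeg : f.natDegree = T.card := by
    rw [hfdef, natDegree_prod_of_monic _ _ fun t _ => monic_X_sub_C (z t)]
    simp [natDegree_X_sub_C]
  have hdeglt : f.degree < s.card := by
    rw [degree_eq_natDegree hmonic.ne_zero, hdeg]
    exact_mod_cast Nat.lt_of_lt_of_le (Nat.lt_succ_self _) (le_of_eq hcard)
  have hinterp := Lagrange.eq_interpolate hvs hdeglt
  have hco : f.coeff T.card = 1 := by
    have := hmonic.coeff_natDegree
    rwa [hdeg] at this
  rw [hinterp] at hco
  rw [Lagrange.interpolate_apply] at hco
  rw [finset_sum_coeff] at hco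
  rw [← hco]
  refine Finset.sum_congr rfl fun i hi => ?_
  rw [coeff_C_mul]
  have hbn : (Lagrange.basis s v i).natDegree = T.card := by
    rw [Lagrange.natDegree_basis hvs hi]; omega
  have hlc : (Lagrange.basis s v i).coeff T.card = ∏ j ∈ s.erase i, (v i - v j)⁻¹ := by
    rw [← hbn, ← leadingCoeff, Lagrange.basis, leadingCoeff_prod]
    refine Finset.prod_congr rfl fun j hj => ?_
    have hne : v i ≠ v j := by
      rcases mem_erase.mp hj with ⟨hij, hjs⟩
      exact fun h => hij (hvs hjs hi h.symm)
    rw [Lagrange.basisDivisor, leadingCoeff_mul, leadingCoeff_C, leadingCoeff_X_sub_C, mul_one]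
  rw [hlc, eval_prod]
  simp only [eval_sub, eval_X, eval_C]
  rw [div_eq_mul_inv, ← Finset.prod_inv_distrib]

lemma row_prod_lemma {M : Type*} [CommRing M] (g : ℕ → ℕ → M) (f : ℕ → ℕ)
    (hdec : ∀ i, 1 ≤ i → f (i + 1) ≤ f i) (n : ℕ) :
    (∏ i ∈ Icc 1 n, g (i-1) (f i)) * (∏ i ∈ (Icc 1 n).filter (fun i => f (i+1) < f i), g i (f i))
      * g n (f (n+1))
    = (∏ i ∈ Icc 1 n, g i (f i)) *
        (∏ i ∈ (Icc 1 n).filter (fun i => f (i+1) < f i), g i (f (i+1))) * g 0 (f 1) := by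
  induction n with
  | zero => simp
  | succ n ih =>
    have hicc : Icc 1 (n+1) = insert (n+1) (Icc 1 n) := by
      ext k; simp only [Finset.mem_Icc, Finset.mem_insert]; omega
    have hnot : (n+1) ∉ Icc 1 n := by simp
    have hnotf : (n+1) ∉ (Icc 1 n).filter (fun i => f (i+1) < f i) :=
      fun h => hnot (mem_filter.mp h).1
    rw [hicc, Finset.filter_insert]
    by_cases hP : f (n+2) < f (n+1)
    · rw [if_pos hP, prod_insert hnot, prod_insert hnot, prod_insert hnotf, prod_insert hnotf]
      simp only [Nat.add_sub_cancel]
      linear_combination (g (n+1) (f (n+1)) * g (n+1) (f (n+2))) * ih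
    · have heq : f (n+2) = f (n+1) := le_antisymm (hdec (n+1) (by omega)) (by omega)
      rw [if_neg hP, prod_insert hnot, prod_insert hnot]
      simp only [Nat.add_sub_cancel]
      rw [show n+1+1 = n+2 from rfl, heq]
      linear_combination (g (n+1) (f (n+1))) * ih

namespace CWBRaux
variable {f : ℕ → ℕ} {L : ℕ} {c c' : ℕ × ℕ}
variable {f : ℕ → ℕ} {L : ℕ}

-- P1 monotone
lemma fmono (hf : IsPartitionFun f L) : ∀ a b, 1 ≤ a → a ≤ b → f b ≤ f a := by
  intro a b ha hab
  induction b, hab using Nat.le_induction with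
  | base => exact le_refl _
  | succ b hb ih => exact le_trans (hf.1 b (by omega)) ih

lemma f_zero (hf : IsPartitionFun f L) {i : ℕ} (hi : L < i) : f i = 0 := hf.2 i hi

lemma le_L_of_f_pos (hf : IsPartitionFun f L) {i : ℕ} (hi : 1 ≤ f i) : i ≤ L := by
  by_contra h; rw [hf.2 i (by omega)] at hi; omega

-- P2
lemma conj_le_L : conj f L j ≤ L := by
  have := Finset.card_filter_le (Icc 1 L) (fun i => j ≤ f i)
  simpa [Nat.card_Icc, conj] using this

-- P3' : mem → ≤ conj
lemma le_conj (hf : IsPartitionFun f L) {i j : ℕ} (hj : 1 ≤ j) (hi : 1 ≤ i) (h : j ≤ f i) :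
    i ≤ conj f L j := by
  have hiL : i ≤ L := le_L_of_f_pos hf (le_trans hj h)
  have hsub : Icc 1 i ⊆ (Icc 1 L).filter (fun i' => j ≤ f i') := by
    intro i' hi'
    rw [mem_Icc] at hi'
    rw [mem_filter, mem_Icc]
    exact ⟨⟨hi'.1, le_trans hi'.2 hiL⟩, le_trans h (fmono hf i' i hi'.1 hi'.2)⟩
  have := Finset.card_le_card hsub
  simpa [Nat.card_Icc, conj] using this

-- P4 : ≤ conj → mem
lemma conj_spec (hf : IsPartitionFun f L) {i j : ℕ} (hi : 1 ≤ i) (h : i ≤ conj f L j) :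
    j ≤ f i := by
  by_contra hlt
  push_neg at hlt
  have hsub : (Icc 1 L).filter (fun i' => j ≤ f i') ⊆ Icc 1 (i-1) := by
    intro i' hi'
    rw [mem_filter, mem_Icc] at hi'
    rw [mem_Icc]
    refine ⟨hi'.1.1, ?_⟩
    by_contra h'
    have : i ≤ i' := by omega
    have := fmono hf i i' hi this
    omega
  have := Finset.card_le_card hsub
  rw [Nat.card_Icc] at this
  have : conj f L j ≤ i - 1 := by simpa [conj] using this
  omega

-- P5
lemma conj_anti {j j' : ℕ} (h : j ≤ j') : conj f L j' ≤ conj f L j := by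
  apply Finset.card_le_card
  intro i hi
  rw [mem_filter] at hi ⊢
  exact ⟨hi.1, le_trans h hi.2⟩

-- corner facts
lemma corner_r_pos (hc : c ∈ outerCorners f L) : 1 ≤ c.1 := by
  simp only [outerCorners, mem_filter, mem_product, mem_Icc] at hc; omega

lemma corner_r_le (hc : c ∈ outerCorners f L) : c.1 ≤ L + 1 := by
  simp only [outerCorners, mem_filter, mem_product, mem_Icc] at hc; omega

lemma corner_s (hc : c ∈ outerCorners f L) : c.2 = f c.1 + 1 := by
  simp only [outerCorners, mem_filter] at hc; exact hc.2.1

lemma corner_cond (hc : c ∈ outerCorners f L) : c.1 = 1 ∨ c.2 ≤ f (c.1 - 1) := by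
  simp only [outerCorners, mem_filter] at hc; exact hc.2.2

-- P7
lemma conj_corner (hf : IsPartitionFun f L) (hc : c ∈ outerCorners f L) :
    conj f L c.2 = c.1 - 1 := by
  have hr := corner_r_pos hc
  have hs := corner_s hc
  have h1 : conj f L c.2 ≤ c.1 - 1 := by
    by_contra h
    have h2 : c.1 ≤ conj f L c.2 := by omega
    have := conj_spec hf hr h2
    omega
  have h2 : c.1 - 1 ≤ conj f L c.2 := by
    rcases corner_cond hc with h | h
    · omega
    · rcases Nat.eq_or_lt_of_le hr with h' | h'
      · omega
      · exact le_conj hf (by omega) (by omega) h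
  omega

-- P10
lemma corner_unique (hc : c ∈ outerCorners f L) (hc' : c' ∈ outerCorners f L)
    (h : c.1 = c'.1) : c = c' := by
  have := corner_s hc
  have := corner_s hc'
  have : c.2 = c'.2 := by rw [‹c.2 = _›, ‹c'.2 = _›, h]
  exact Prod.ext h this

-- P8
lemma top_mem : (1, f 1 + 1) ∈ outerCorners f L := by
  simp [outerCorners, mem_filter, mem_product, mem_Icc]

-- P9
lemma bot_mem (hf : IsPartitionFun f L) : (conj f L 1 + 1, 1) ∈ outerCorners f L := by
  have hL : conj f L 1 ≤ L := conj_le_L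
  have hzero : f (conj f L 1 + 1) = 0 := by
    by_contra h
    have h1 : 1 ≤ f (conj f L 1 + 1) := by omega
    have := le_conj hf le_rfl (by omega) h1
    omega
  simp only [outerCorners, mem_filter, mem_product, mem_Icc]
  refine ⟨⟨⟨by omega, by omega⟩, by omega⟩, by omega, ?_⟩
  rcases Nat.eq_zero_or_pos (conj f L 1) with h | h
  · left; omega
  · right
    simp only [Nat.add_sub_cancel]
    exact conj_spec hf h le_rfl

-- P11
lemma corner_r_le_L (hf : IsPartitionFun f L) (hc : c ∈ outerCorners f L) (hs : 2 ≤ c.2) :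
    c.1 ≤ L := by
  have := corner_s hc
  exact le_L_of_f_pos hf (by omega)

-- P12
lemma conj_one (hf : IsPartitionFun f L) (hL : 1 ≤ f L) (hL1 : 1 ≤ L) : conj f L 1 = L :=
  le_antisymm conj_le_L (le_conj hf le_rfl hL1 hL)


variable {F : Type*} [Field F]

lemma mem_outer (hf : IsPartitionFun f L) {r' : ℕ} (h1 : 1 ≤ r') (h2 : r' ≤ L + 1)
    (h4 : r' = 1 ∨ f r' + 1 ≤ f (r' - 1)) : (r', f r' + 1) ∈ outerCorners f L := by
  have h3 : f r' ≤ f 1 := fmono hf 1 r' le_rfl h1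
  rw [outerCorners, mem_filter, mem_product]
  refine ⟨⟨?_, ?_⟩, rfl, h4⟩
  · rw [mem_Icc]; omega
  · rw [mem_Icc]; omega

lemma cancelled_row (v0 : ℕ → ℕ → F) (hf : IsPartitionFun f L)
    (hc : c ∈ outerCorners f L) :
    (∏ i ∈ Icc 1 (c.1-1), (X - C (v0 (i-1) (f i)))) *
      (∏ i ∈ (Icc 1 (c.1-1)).filter (fun i => f (i+1) < f i), (X - C (v0 i (f i))))
    = (∏ i ∈ Icc 1 (c.1-1), (X - C (v0 i (f i)))) *
      (∏ c' ∈ ((outerCorners f L).filter (fun c' => c'.1 ≤ c.1)).erase c,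
        (X - C (v0 (c'.1-1) (c'.2-1)))) := by
  have hr1 := corner_r_pos hc
  have hrL := corner_r_le hc
  have hs := corner_s hc
  rcases Nat.eq_or_lt_of_le hr1 with h1 | h2
  · -- c.1 = 1
    have hempty : ((outerCorners f L).filter (fun c' => c'.1 ≤ c.1)).erase c = ∅ := by
      ext c'
      simp only [mem_erase, mem_filter, notMem_empty, iff_false, not_and]
      intro hne hmem
      intro hle
      exact hne (corner_unique hmem hc (by have := corner_r_pos hmem; omega))
    rw [hempty]
    have : c.1 - 1 = 0 := by omega
    simp [this]
  · -- c.1 ≥ 2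
    set n := c.1 - 1 with hn
    have hn1 : 1 ≤ n := by omega
    have hkey := row_prod_lemma (fun a b => (X : Polynomial F) - C (v0 a b)) f hf.1 n
    have hfn : f (n+1) < f n := by
      rcases corner_cond hc with h | h
      · omega
      · have e1 : f (n+1) = f c.1 := by congr 1; omega
        have e2 : f n = f (c.1 - 1) := rfl
        omega
    have hmem : n ∈ (Icc 1 n).filter (fun i => f (i+1) < f i) := by
      simp only [mem_filter, mem_Icc]; exact ⟨⟨hn1, le_rfl⟩, hfn⟩
    rw [← Finset.mul_prod_erase _ (fun i => (X:Polynomial F) - C (v0 i (f (i+1)))) hmem] at hkey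
    -- hkey : rowD * inner * Z = rowN * (Z * rest) * g01
    have hbij : (∏ c' ∈ ((outerCorners f L).filter (fun c' => c'.1 ≤ c.1)).erase c,
        ((X : Polynomial F) - C (v0 (c'.1-1) (c'.2-1))))
        = ∏ i ∈ insert 0 (((Icc 1 n).filter (fun i => f (i+1) < f i)).erase n),
            ((X : Polynomial F) - C (v0 i (f (i+1)))) := by
      refine Finset.prod_nbij' (fun c' => c'.1 - 1) (fun i => (i+1, f (i+1) + 1)) ?_ ?_ ?_ ?_ ?_
      · intro a ha
        simp only [mem_erase, mem_filter] at ha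
        obtain ⟨hane, hamem, hale⟩ := ha
        rcases Nat.eq_or_lt_of_le (corner_r_pos hamem) with ha1 | ha2
        · simp [← ha1]
        · simp only [mem_insert, mem_erase, mem_filter, mem_Icc]
          right
          have has := corner_s hamem
          have hcond : a.2 ≤ f (a.1 - 1) := by
            rcases corner_cond hamem with h | h
            · omega
            · exact h
          have hrw : a.1 - 1 + 1 = a.1 := by omega
          refine ⟨?_, ⟨by omega, by omega⟩, ?_⟩
          · intro heq
            exact hane (corner_unique hamem hc (by omega))
          · rw [hrw]; omega
      · intro i hi
        simp only [mem_insert, mem_erase, mem_filter, mem_Icc] at hi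
        simp only [mem_erase, mem_filter]
        rcases hi with hi0 | ⟨hine, ⟨hi1, hin⟩, hilt⟩
        · subst hi0
          refine ⟨?_, top_mem, by omega⟩
          intro h
          have := congrArg Prod.fst h
          simp only at this
          omega
        · refine ⟨?_, ?_, by omega⟩
          · intro h
            have := congrArg Prod.fst h
            simp only at this
            omega
          · refine mem_outer hf (by omega) (by omega) (Or.inr ?_)
            simp only [Nat.add_sub_cancel]
            omega
      · intro a ha
        simp only [mem_erase, mem_filter] at ha
        have h1 : a.1 - 1 + 1 = a.1 := by have := corner_r_pos ha.2.1; omega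
        have h2 := corner_s ha.2.1
        ext <;> simp [h1, ← h2]
      · intro i _; simp
      · intro a ha
        simp only [mem_erase, mem_filter] at ha
        have h1 : a.1 - 1 + 1 = a.1 := by have := corner_r_pos ha.2.1; omega
        have h2 := corner_s ha.2.1
        have h3 : a.2 - 1 = f a.1 := by omega
        show (X:Polynomial F) - C (v0 (a.1-1) (a.2-1)) = (X:Polynomial F) - C (v0 (a.1-1) (f (a.1-1+1)))
        rw [h1, h3]
    rw [hbij]
    have h0notin : 0 ∉ ((Icc 1 n).filter (fun i => f (i+1) < f i)).erase n := by
      simp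
    rw [Finset.prod_insert h0notin]
    have hZ : ((X : Polynomial F) - C (v0 n (f (n+1)))) ≠ 0 := Polynomial.X_sub_C_ne_zero _
    apply mul_right_cancel₀ hZ
    show _ = _ * (((X:Polynomial F) - C (v0 0 (f (0+1)))) * _) * _
    linear_combination hkey
lemma conj_pos_facts (hf : IsPartitionFun f L) {j : ℕ} (hj : 1 ≤ j)
    (hlt : conj f L (j+1) < conj f L j) :
    f (conj f L (j+1) + 1) = j := by
  have h1 : conj f L (j+1) + 1 ≤ conj f L j := by omega
  have h2 : j ≤ f (conj f L (j+1) + 1) := conj_spec hf (by omega) h1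
  have h3 : f (conj f L (j+1) + 1) ≤ j := by
    by_contra h
    have := le_conj hf (by omega : 1 ≤ j + 1) (by omega) (by omega : j + 1 ≤ f (conj f L (j+1) + 1))
    omega
  omega

lemma cancelled_col (v0 : ℕ → ℕ → F) (hf : IsPartitionFun f L)
    (hc : c ∈ outerCorners f L) :
    (∏ j ∈ Icc 1 (c.2-1), (X - C (v0 (conj f L j) (j-1)))) *
      (∏ j ∈ (Icc 1 (c.2-1)).filter (fun j => conj f L (j+1) < conj f L j),
        (X - C (v0 (conj f L j) j)))
    = (∏ j ∈ Icc 1 (c.2-1), (X - C (v0 (conj f L j) j))) *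
      (∏ c' ∈ (outerCorners f L).filter (fun c' => ¬ c'.1 ≤ c.1),
        (X - C (v0 (c'.1-1) (c'.2-1)))) := by
  have hr1 := corner_r_pos hc
  have hrL := corner_r_le hc
  have hs := corner_s hc
  have hconjc := conj_corner hf hc
  rcases Nat.lt_or_ge c.2 2 with h1 | h2
  · -- c.2 = 1
    have hs1 : c.2 = 1 := by
      have : 1 ≤ c.2 := by omega
      omega
    have hempty : (outerCorners f L).filter (fun c' => ¬ c'.1 ≤ c.1) = ∅ := by
      ext c'
      simp only [mem_filter, notMem_empty, iff_false, not_and, not_not]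
      intro hmem
      have hr'1 := corner_r_pos hmem
      have hr's := corner_s hmem
      by_contra hgt
      push_neg at hgt
      have hne1 : c'.1 ≠ 1 := by omega
      have hcond : c'.2 ≤ f (c'.1 - 1) := by
        rcases corner_cond hmem with h | h
        · omega
        · exact h
      have : 1 ≤ f (c'.1 - 1) := by omega
      have hle : c'.1 - 1 ≤ conj f L 1 := le_conj hf le_rfl (by omega) this
      have hc1 : conj f L 1 = c.1 - 1 := by
        have h := hconjc
        rw [hs1] at h
        exact h
      omega
    rw [hempty]
    have : c.2 - 1 = 0 := by omega
    simp [this]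
  · -- c.2 ≥ 2
    set m := c.2 - 1 with hm
    have hm1 : 1 ≤ m := by omega
    have hrLL : c.1 ≤ L := corner_r_le_L hf hc h2
    have hkey := row_prod_lemma (fun a b => (X : Polynomial F) - C (v0 b a)) (conj f L)
      (fun j _ => conj_anti (by omega)) m
    have hcm : conj f L (m+1) = c.1 - 1 := by
      have : m + 1 = c.2 := by omega
      rw [this, hconjc]
    have hcm2 : c.1 ≤ conj f L m := by
      apply le_conj hf hm1 (by omega)
      have : f c.1 = m := by omega
      omega
    have hmem : m ∈ (Icc 1 m).filter (fun j => conj f L (j+1) < conj f L j) := by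
      simp only [mem_filter, mem_Icc]
      exact ⟨⟨hm1, le_rfl⟩, by omega⟩
    rw [← Finset.mul_prod_erase _ (fun j => (X:Polynomial F) - C (v0 (conj f L (j+1)) j)) hmem]
      at hkey
    have hbij : (∏ c' ∈ (outerCorners f L).filter (fun c' => ¬ c'.1 ≤ c.1),
        ((X : Polynomial F) - C (v0 (c'.1-1) (c'.2-1))))
        = ∏ j ∈ insert 0 (((Icc 1 m).filter (fun j => conj f L (j+1) < conj f L j)).erase m),
            ((X : Polynomial F) - C (v0 (conj f L (j+1)) j)) := by
      refine Finset.prod_nbij' (fun c' => c'.2 - 1) (fun j => (conj f L (j+1) + 1, j+1))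
        ?_ ?_ ?_ ?_ ?_
      · intro a ha
        simp only [mem_filter] at ha
        obtain ⟨hamem, hagt⟩ := ha
        push_neg at hagt
        have har := corner_r_pos hamem
        have has := corner_s hamem
        rcases Nat.lt_or_ge a.2 2 with ha1 | ha2
        · have : a.2 - 1 = 0 := by omega
          simp [this]
        · simp only [mem_insert, mem_erase, mem_filter, mem_Icc]
          right
          have haL : a.1 ≤ L := corner_r_le_L hf hamem ha2
          have hfa : f a.1 = a.2 - 1 := by omega
          have hfle : f a.1 ≤ f c.1 := fmono hf c.1 a.1 hr1 (by omega)
          have hcond : a.2 ≤ f (a.1 - 1) := by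
            rcases corner_cond hamem with h | h
            · omega
            · exact h
          have hfle2 : f (a.1 - 1) ≤ f c.1 := fmono hf c.1 (a.1 - 1) hr1 (by omega)
          have hconja : conj f L a.2 = a.1 - 1 := conj_corner hf hamem
          have e1 : a.2 - 1 + 1 = a.2 := by omega
          have hlt : conj f L (a.2 - 1 + 1) < conj f L (a.2 - 1) := by
            rw [e1, hconja]
            have : a.1 ≤ conj f L (a.2 - 1) :=
              le_conj hf (by omega) (by omega) (by omega)
            omega
          refine ⟨?_, ⟨by omega, by omega⟩, hlt⟩
          -- a.2 - 1 ≠ m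
          omega
      · intro j hj
        simp only [mem_insert, mem_erase, mem_filter, mem_Icc] at hj
        simp only [mem_filter]
        rcases hj with hj0 | ⟨hjne, ⟨hj1, hjm⟩, hjlt⟩
        · subst hj0
          constructor
          · have h0 : (0:ℕ) + 1 = 1 := rfl
            rw [h0]
            exact bot_mem hf
          · have h6 : c.1 ≤ conj f L 1 := le_trans hcm2 (conj_anti hm1)
            show ¬ (conj f L (0+1) + 1 ≤ c.1)
            have h0 : (0:ℕ) + 1 = 1 := rfl
            rw [h0]
            omega
        · have hfc := conj_pos_facts hf hj1 hjlt
          constructor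
          · have hmem2 : (conj f L (j+1) + 1, f (conj f L (j+1) + 1) + 1) ∈ outerCorners f L := by
              refine mem_outer hf (by omega) ?_ ?_
              · have := conj_le_L (f := f) (L := L) (j := j+1)
                omega
              · rcases Nat.eq_zero_or_pos (conj f L (j+1)) with hz | hz
                · left; omega
                · right
                  simp only [Nat.add_sub_cancel]
                  have h5 : j + 1 ≤ f (conj f L (j+1)) := conj_spec hf hz le_rfl
                  omega
            rw [hfc] at hmem2
            exact hmem2
          · have hjm' : j + 1 ≤ m := by omega
            have h6 : c.1 ≤ conj f L (j+1) := le_trans hcm2 (conj_anti hjm')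
            show ¬ (conj f L (j+1) + 1 ≤ c.1)
            omega
      · intro a ha
        simp only [mem_filter] at ha
        obtain ⟨hamem, hagt⟩ := ha
        have har := corner_r_pos hamem
        have has := corner_s hamem
        have hconja := conj_corner hf hamem
        have e1 : a.2 - 1 + 1 = a.2 := by omega
        ext
        · show conj f L (a.2 - 1 + 1) + 1 = a.1
          rw [e1, hconja]
          omega
        · show a.2 - 1 + 1 = a.2
          exact e1
      · intro j _
        simp
      · intro a ha
        simp only [mem_filter] at ha
        obtain ⟨hamem, hagt⟩ := ha
        have har := corner_r_pos hamem
        have has := corner_s hamem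
        have hconja := conj_corner hf hamem
        have e1 : a.2 - 1 + 1 = a.2 := by omega
        show (X:Polynomial F) - C (v0 (a.1-1) (a.2-1))
            = (X:Polynomial F) - C (v0 (conj f L (a.2-1+1)) (a.2-1))
        rw [e1, hconja]
    rw [hbij]
    have h0notin : 0 ∉ ((Icc 1 m).filter (fun j => conj f L (j+1) < conj f L j)).erase m := by
      simp
    rw [Finset.prod_insert h0notin]
    have hZ : ((X : Polynomial F) - C (v0 (conj f L (m+1)) m)) ≠ 0 := Polynomial.X_sub_C_ne_zero _
    apply mul_right_cancel₀ hZ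
    show _ = _ * (((X:Polynomial F) - C (v0 (conj f L (0+1)) 0)) * _) * _
    linear_combination hkey

lemma conj_fix (hf : IsPartitionFun f L) {j : ℕ} (hj : 1 ≤ j)
    (hlt : conj f L (j+1) < conj f L j) : f (conj f L j) = j := by
  have h1 : j ≤ f (conj f L j) := conj_spec hf (by omega) le_rfl
  have h2 : f (conj f L j) ≤ j := by
    by_contra h
    have := le_conj hf (by omega : 1 ≤ j+1) (by omega) (by omega : j + 1 ≤ f (conj f L j))
    omega
  omega

lemma conj_fix2 (hf : IsPartitionFun f L) {j : ℕ} (hj : 1 ≤ j)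
    (hlt : conj f L (j+1) < conj f L j) : f (conj f L j + 1) < f (conj f L j) := by
  rw [conj_fix hf hj hlt]
  by_contra h
  have := le_conj hf hj (by omega) (by omega : j ≤ f (conj f L j + 1))
  omega

lemma conj_fix3 (hf : IsPartitionFun f L) {i : ℕ} (hi : 1 ≤ i) (hiL : i ≤ L)
    (hlt : f (i+1) < f i) (hfi : 1 ≤ f i) : conj f L (f i) = i := by
  have h1 : i ≤ conj f L (f i) := le_conj hf hfi hi le_rfl
  have h2 : conj f L (f i) ≤ i := by
    by_contra h
    have := conj_spec hf (by omega : 1 ≤ i + 1) (by omega : i + 1 ≤ conj f L (f i))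
    omega
  omega

lemma inner_split {M : Type*} [CommMonoid M] (g : ℕ → ℕ → M) (hf : IsPartitionFun f L)
    (hc : c ∈ outerCorners f L) :
    (∏ i ∈ (Icc 1 (c.1-1)).filter (fun i => f (i+1) < f i), g i (f i)) *
      (∏ j ∈ (Icc 1 (c.2-1)).filter (fun j => conj f L (j+1) < conj f L j), g (conj f L j) j)
    = ∏ i ∈ (Icc 1 L).filter (fun i => f (i+1) < f i), g i (f i) := by
  have hr1 := corner_r_pos hc
  have hs := corner_s hc
  have hconjc := conj_corner hf hc
  have h1 : (Icc 1 (c.1-1)).filter (fun i => f (i+1) < f i)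
      = ((Icc 1 L).filter (fun i => f (i+1) < f i)).filter (fun i => c.2 ≤ f i) := by
    ext i
    simp only [mem_filter, mem_Icc]
    constructor
    · rintro ⟨⟨hi1, hi2⟩, hP⟩
      have hiL : i ≤ L := le_trans hi2 (by rw [← hconjc]; exact conj_le_L)
      have hfi : c.2 ≤ f i := conj_spec hf hi1 (by omega)
      exact ⟨⟨⟨hi1, hiL⟩, hP⟩, hfi⟩
    · rintro ⟨⟨⟨hi1, hiL⟩, hP⟩, hfi⟩
      have := le_conj hf (by omega : 1 ≤ c.2) hi1 hfi
      exact ⟨⟨hi1, by omega⟩, hP⟩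
  have h2 : (∏ j ∈ (Icc 1 (c.2-1)).filter (fun j => conj f L (j+1) < conj f L j),
        g (conj f L j) j)
      = ∏ i ∈ (((Icc 1 L).filter (fun i => f (i+1) < f i)).filter (fun i => ¬ c.2 ≤ f i)),
          g i (f i) := by
    refine Finset.prod_nbij' (fun j => conj f L j) (fun i => f i) ?_ ?_ ?_ ?_ ?_
    · intro j hj
      simp only [mem_filter, mem_Icc] at hj
      obtain ⟨⟨hj1, hj2⟩, hjlt⟩ := hj
      simp only [mem_filter, mem_Icc]
      have hfix := conj_fix hf hj1 hjlt
      have hfix2 := conj_fix2 hf hj1 hjlt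
      refine ⟨⟨⟨by omega, conj_le_L⟩, hfix2⟩, by omega⟩
    · intro i hi
      simp only [mem_filter, mem_Icc] at hi
      obtain ⟨⟨⟨hi1, hiL⟩, hP⟩, hfi⟩ := hi
      push_neg at hfi
      simp only [mem_filter, mem_Icc]
      have hfi1 : 1 ≤ f i := by omega
      refine ⟨⟨by omega, by omega⟩, ?_⟩
      rw [conj_fix3 hf hi1 hiL hP hfi1]
      have h3 : i ≤ conj f L (f i) := le_conj hf hfi1 hi1 le_rfl
      have h4 : conj f L (f i + 1) < i := by
        by_contra h
        have := conj_spec hf hi1 (by omega : i ≤ conj f L (f i + 1))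
        omega
      omega
    · intro j hj
      simp only [mem_filter, mem_Icc] at hj
      exact conj_fix hf hj.1.1 hj.2
    · intro i hi
      simp only [mem_filter, mem_Icc] at hi
      obtain ⟨⟨⟨hi1, hiL⟩, hP⟩, hfi⟩ := hi
      push_neg at hfi
      exact conj_fix3 hf hi1 hiL hP (by omega)
    · intro j hj
      simp only [mem_filter, mem_Icc] at hj
      rw [conj_fix hf hj.1.1 hj.2]
  rw [h1, h2]
  exact Finset.prod_filter_mul_prod_filter_not _ _ _

lemma oc_split {M : Type*} [CommMonoid M] (g : ℕ × ℕ → M) (hc : c ∈ outerCorners f L) :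
    (∏ c' ∈ ((outerCorners f L).filter (fun c' => c'.1 ≤ c.1)).erase c, g c') *
      (∏ c' ∈ (outerCorners f L).filter (fun c' => ¬ c'.1 ≤ c.1), g c')
    = ∏ c' ∈ (outerCorners f L).erase c, g c' := by
  have h1 : ((outerCorners f L).filter (fun c' => c'.1 ≤ c.1)).erase c
      = ((outerCorners f L).erase c).filter (fun c' => c'.1 ≤ c.1) := by
    ext c'
    simp only [mem_erase, mem_filter]
    tauto
  have h2 : (outerCorners f L).filter (fun c' => ¬ c'.1 ≤ c.1)
      = ((outerCorners f L).erase c).filter (fun c' => ¬ c'.1 ≤ c.1) := by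
    ext c'
    simp only [mem_erase, mem_filter]
    constructor
    · rintro ⟨hmem, hgt⟩
      refine ⟨⟨?_, hmem⟩, hgt⟩
      intro h
      subst h
      exact hgt le_rfl
    · rintro ⟨⟨_, hmem⟩, hgt⟩
      exact ⟨hmem, hgt⟩
  rw [h1, h2]
  exact Finset.prod_filter_mul_prod_filter_not _ _ _

lemma master_poly (v0 : ℕ → ℕ → F) (hf : IsPartitionFun f L)
    (hc : c ∈ outerCorners f L) :
    (∏ i ∈ Icc 1 (c.1-1), (X - C (v0 (i-1) (f i)))) *
      (∏ j ∈ Icc 1 (c.2-1), (X - C (v0 (conj f L j) (j-1)))) *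
      (∏ i ∈ (Icc 1 L).filter (fun i => f (i+1) < f i), (X - C (v0 i (f i))))
    = (∏ i ∈ Icc 1 (c.1-1), (X - C (v0 i (f i)))) *
      (∏ j ∈ Icc 1 (c.2-1), (X - C (v0 (conj f L j) j))) *
      (∏ c' ∈ (outerCorners f L).erase c, (X - C (v0 (c'.1-1) (c'.2-1)))) := by
  have h1 := cancelled_row v0 hf hc
  have h2 := cancelled_col v0 hf hc
  have h3 := inner_split (M := Polynomial F) (fun a b => X - C (v0 a b)) hf hc
  have h4 := oc_split (M := Polynomial F) (fun c' => X - C (v0 (c'.1-1) (c'.2-1))) hc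
  linear_combination
    ((∏ j ∈ Icc 1 (c.2-1), ((X:Polynomial F) - C (v0 (conj f L j) (j-1)))) *
      (∏ j ∈ (Icc 1 (c.2-1)).filter (fun j => conj f L (j+1) < conj f L j),
        ((X:Polynomial F) - C (v0 (conj f L j) j)))) * h1
    + ((∏ i ∈ Icc 1 (c.1-1), ((X:Polynomial F) - C (v0 i (f i)))) *
      (∏ c' ∈ ((outerCorners f L).filter (fun c' => c'.1 ≤ c.1)).erase c,
        ((X:Polynomial F) - C (v0 (c'.1-1) (c'.2-1))))) * h2
    - ((∏ i ∈ Icc 1 (c.1-1), ((X:Polynomial F) - C (v0 (i-1) (f i)))) *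
      (∏ j ∈ Icc 1 (c.2-1), ((X:Polynomial F) - C (v0 (conj f L j) (j-1))))) * h3
    + ((∏ i ∈ Icc 1 (c.1-1), ((X:Polynomial F) - C (v0 i (f i)))) *
      (∏ j ∈ Icc 1 (c.2-1), ((X:Polynomial F) - C (v0 (conj f L j) j)))) * h4

/-- partial sums -/
def uF {F : Type*} [CommRing F] (x : ℕ → F) (a : ℕ) : F := ∑ k ∈ Ioc 0 a, x k

lemma sum_Icc_eq {F : Type*} [CommRing F] (x : ℕ → F) {a b : ℕ} (ha : 1 ≤ a) (hb : a ≤ b + 1) :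
    ∑ k ∈ Icc a b, x k = uF x b - uF x (a-1) := by
  have h1 : Icc a b = Ioc (a-1) b := by
    ext k; simp only [mem_Icc, mem_Ioc]; omega
  have h2 := Finset.sum_Ioc_consecutive x (by omega : 0 ≤ a-1) (by omega : a-1 ≤ b)
  rw [h1, uF, uF, ← h2]
  ring

lemma card_oc (hf : IsPartitionFun f L) :
    ((Icc 1 L).filter (fun i => f (i+1) < f i)).card + 1 = (outerCorners f L).card := by
  have h1 : ((outerCorners f L).erase (1, f 1 + 1)).card
      = ((Icc 1 L).filter (fun i => f (i+1) < f i)).card := by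
    refine Finset.card_nbij' (fun c' => c'.1 - 1) (fun i => (i+1, f (i+1) + 1)) ?_ ?_ ?_ ?_
    · intro a ha
      simp only [mem_coe, mem_erase] at ha
      obtain ⟨hane, hamem⟩ := ha
      have har := corner_r_pos hamem
      have harL := corner_r_le hamem
      have has := corner_s hamem
      have har2 : 2 ≤ a.1 := by
        rcases Nat.eq_or_lt_of_le har with h | h
        · exfalso
          apply hane
          have : a = (a.1, a.2) := rfl
          have heq := corner_unique hamem (top_mem (f := f) (L := L)) (by omega)
          rw [heq]
        · omega
      simp only [mem_coe, mem_filter, mem_Icc]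
      have hcond : a.2 ≤ f (a.1 - 1) := by
        rcases corner_cond hamem with h | h
        · omega
        · exact h
      have hrw : a.1 - 1 + 1 = a.1 := by omega
      refine ⟨⟨by omega, by omega⟩, ?_⟩
      rw [hrw]
      omega
    · intro i hi
      simp only [mem_coe, mem_filter, mem_Icc] at hi
      obtain ⟨⟨hi1, hiL⟩, hP⟩ := hi
      simp only [mem_coe, mem_erase]
      constructor
      · intro h
        have := congrArg Prod.fst h
        simp only at this
        omega
      · refine mem_outer hf (by omega) (by omega) (Or.inr ?_)
        simp only [Nat.add_sub_cancel]
        omega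
    · intro a ha
      simp only [mem_coe, mem_erase] at ha
      have har := corner_r_pos ha.2
      have has := corner_s ha.2
      have h1 : a.1 - 1 + 1 = a.1 := by omega
      ext
      · show a.1 - 1 + 1 = a.1
        exact h1
      · show f (a.1 - 1 + 1) + 1 = a.2
        rw [h1]; omega
    · intro i _
      simp
  have h2 : (1, f 1 + 1) ∈ outerCorners f L := top_mem
  have h3 := Finset.card_erase_of_mem h2
  have h4 : 1 ≤ (outerCorners f L).card := Finset.card_pos.mpr ⟨_, h2⟩
  omega

lemma D_injOn {F : Type*} [Field F] (x y : ℕ → F) (hf : IsPartitionFun f L)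
    (hvv : ∀ a a' b b' : ℕ, a ≤ a' → b' ≤ b → (a < a' ∨ b' < b) →
      uF x a' - uF y b' ≠ uF x a - uF y b) :
    Set.InjOn (fun c' : ℕ × ℕ => uF x (c'.1-1) - uF y (c'.2-1)) (outerCorners f L) := by
  intro a ha b hb heq
  simp only [Finset.mem_coe] at ha hb
  rcases lt_trichotomy a.1 b.1 with h | h | h
  · exfalso
    have hsa := corner_s ha
    have hsb := corner_s hb
    have hfb : f b.1 ≤ f a.1 := fmono hf a.1 b.1 (corner_r_pos ha) (by omega)
    exact hvv (a.1-1) (b.1-1) (a.2-1) (b.2-1) (by omega)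
      (by omega) (Or.inl (by have := corner_r_pos ha; omega)) heq.symm
  · exact corner_unique ha hb h
  · exfalso
    have hsa := corner_s ha
    have hsb := corner_s hb
    have hfa : f a.1 ≤ f b.1 := fmono hf b.1 a.1 (corner_r_pos hb) (by omega)
    exact hvv (b.1-1) (a.1-1) (b.2-1) (a.2-1) (by omega)
      (by omega) (Or.inl (by have := corner_r_pos hb; omega)) heq

lemma cells_split {M : Type*} [CommMonoid M] (T : ℕ × ℕ → M) (hf : IsPartitionFun f L)
    (hc : c ∈ outerCorners f L) :
    ∏ p ∈ cells f L, T p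
    = (∏ p ∈ (cells f L).filter (fun p => p.1 ≠ c.1 ∧ p.2 ≠ c.2), T p) *
      (∏ i ∈ Icc 1 (c.1-1), T (i, c.2)) * (∏ j ∈ Icc 1 (c.2-1), T (c.1, j)) := by
  have hr1 := corner_r_pos hc
  have hs := corner_s hc
  have hconjc := conj_corner hf hc
  have key1 := (Finset.prod_filter_mul_prod_filter_not (cells f L)
    (fun p => p.2 = c.2) T).symm
  have key2 := (Finset.prod_filter_mul_prod_filter_not ((cells f L).filter
    (fun p => ¬ p.2 = c.2)) (fun p => p.1 = c.1) T).symm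
  have hcol : ∏ p ∈ (cells f L).filter (fun p => p.2 = c.2), T p
      = ∏ i ∈ Icc 1 (c.1-1), T (i, c.2) := by
    refine Finset.prod_nbij' (fun p => p.1) (fun i => (i, c.2)) ?_ ?_ ?_ ?_ ?_
    · intro p hp
      simp only [mem_filter, cells, mem_product, mem_Icc] at hp
      obtain ⟨⟨⟨h1, h2⟩, h3⟩, h5⟩ := hp
      simp only [mem_Icc]
      have := le_conj hf (by omega : 1 ≤ c.2) h1.1 (by omega : c.2 ≤ f p.1)
      omega
    · intro i hi
      simp only [mem_Icc] at hi
      rw [mem_filter]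
      refine ⟨?_, rfl⟩
      simp only [cells, mem_filter, mem_product, mem_Icc]
      have hile : i ≤ conj f L c.2 := by omega
      have h6 : c.2 ≤ f i := conj_spec hf (by omega) hile
      have h7 : c.2 ≤ f 1 := conj_spec hf le_rfl (by omega)
      have h8 : i ≤ L := le_trans hile conj_le_L
      refine ⟨⟨⟨?_, ?_⟩, ?_, ?_⟩, ?_⟩ <;> omega
    · intro p hp
      simp only [mem_filter] at hp
      rw [Prod.ext_iff]
      exact ⟨rfl, hp.2.symm⟩
    · intro i _
      rfl
    · intro p hp
      simp only [mem_filter] at hp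
      have : ((p.1, c.2) : ℕ × ℕ) = p := by
        rw [Prod.ext_iff]; exact ⟨rfl, hp.2.symm⟩
      rw [← this]
  have hrow : ∏ p ∈ ((cells f L).filter (fun p => ¬ p.2 = c.2)).filter (fun p => p.1 = c.1), T p
      = ∏ j ∈ Icc 1 (c.2-1), T (c.1, j) := by
    refine Finset.prod_nbij' (fun p => p.2) (fun j => (c.1, j)) ?_ ?_ ?_ ?_ ?_
    · intro p hp
      simp only [mem_filter, cells, mem_product, mem_Icc] at hp
      obtain ⟨⟨⟨⟨h1, h2⟩, h3⟩, h4⟩, h5⟩ := hp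
      simp only [mem_Icc]
      rw [h5] at h3
      omega
    · intro j hj
      simp only [mem_Icc] at hj
      rw [mem_filter]
      constructor
      · rw [mem_filter]
        constructor
        · simp only [cells, mem_filter, mem_product, mem_Icc]
          have hrL : c.1 ≤ L := corner_r_le_L hf hc (by omega)
          have h7 : f c.1 ≤ f 1 := fmono hf 1 c.1 le_rfl hr1
          refine ⟨⟨⟨?_, ?_⟩, ?_, ?_⟩, ?_⟩ <;> omega
        · show ¬ j = c.2
          omega
      · rfl
    · intro p hp
      simp only [mem_filter] at hp
      rw [Prod.ext_iff]
      exact ⟨hp.2.symm, rfl⟩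
    · intro j _
      rfl
    · intro p hp
      simp only [mem_filter] at hp
      have : ((c.1, p.2) : ℕ × ℕ) = p := by
        rw [Prod.ext_iff]; exact ⟨hp.2.symm, rfl⟩
      rw [← this]
  have hfilter : ((cells f L).filter (fun p => ¬ p.2 = c.2)).filter (fun p => ¬ p.1 = c.1)
      = (cells f L).filter (fun p => p.1 ≠ c.1 ∧ p.2 ≠ c.2) := by
    rw [Finset.filter_filter]
    apply Finset.filter_congr
    intro p _
    tauto
  rw [key1, key2, hcol, hrow, hfilter]
  ac_rfl

def vvF {F : Type*} [CommRing F] (x y : ℕ → F) (a b : ℕ) : F := uF x a - uF y b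

lemma D_injOn' {F : Type*} [Field F] (x y : ℕ → F) (hf : IsPartitionFun f L)
    (hvv : ∀ a a' b b' : ℕ, a ≤ a' → b' ≤ b → (a < a' ∨ b' < b) →
      vvF x y a' b' ≠ vvF x y a b) :
    Set.InjOn (fun c' : ℕ × ℕ => vvF x y (c'.1-1) (c'.2-1)) (outerCorners f L) := by
  intro a ha b hb heq
  simp only [Finset.mem_coe] at ha hb
  rcases lt_trichotomy a.1 b.1 with h | h | h
  · exfalso
    have hsa := corner_s ha
    have hsb := corner_s hb
    have hfb : f b.1 ≤ f a.1 := fmono hf a.1 b.1 (corner_r_pos ha) (by omega)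
    exact hvv (a.1-1) (b.1-1) (a.2-1) (b.2-1) (by omega)
      (by omega) (Or.inl (by have := corner_r_pos ha; omega)) heq.symm
  · exact corner_unique ha hb h
  · exfalso
    have hsa := corner_s ha
    have hsb := corner_s hb
    have hfa : f a.1 ≤ f b.1 := fmono hf b.1 a.1 (corner_r_pos hb) (by omega)
    exact hvv (b.1-1) (a.1-1) (b.2-1) (a.2-1) (by omega)
      (by omega) (Or.inl (by have := corner_r_pos hb; omega)) heq

lemma cweq_main {F : Type*} [Field F] (x y : ℕ → F) (hf : IsPartitionFun f L)
    (hvv : ∀ a a' b b' : ℕ, a ≤ a' → b' ≤ b → (a < a' ∨ b' < b) →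
      vvF x y a' b' ≠ vvF x y a b) :
    ∏ p ∈ cells f L,
        ((∑ k ∈ Finset.Icc p.1 (conj f L p.2), x k) + ∑ l ∈ Finset.Icc p.2 (f p.1), y l) =
      ∑ c ∈ outerCorners f L,
        (∏ p ∈ (cells f L).filter (fun p => p.1 ≠ c.1 ∧ p.2 ≠ c.2),
            ((∑ k ∈ Finset.Icc p.1 (conj f L p.2), x k) + ∑ l ∈ Finset.Icc p.2 (f p.1), y l)) *
        (∏ i ∈ Finset.Icc 1 (c.1 - 1),
            ((∑ k ∈ Finset.Icc (i + 1) (c.1 - 1), x k) + ∑ l ∈ Finset.Icc c.2 (f i), y l)) *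
        (∏ j ∈ Finset.Icc 1 (c.2 - 1),
            ((∑ k ∈ Finset.Icc c.1 (conj f L j), x k) +
              ∑ l ∈ Finset.Icc (j + 1) (c.2 - 1), y l)) := by
  classical
  have star : ∀ c ∈ outerCorners f L,
      ((∏ p ∈ (cells f L).filter (fun p => p.1 ≠ c.1 ∧ p.2 ≠ c.2),
          ((∑ k ∈ Finset.Icc p.1 (conj f L p.2), x k) + ∑ l ∈ Finset.Icc p.2 (f p.1), y l)) *
        (∏ i ∈ Finset.Icc 1 (c.1 - 1),
            ((∑ k ∈ Finset.Icc (i + 1) (c.1 - 1), x k) + ∑ l ∈ Finset.Icc c.2 (f i), y l)) *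
        (∏ j ∈ Finset.Icc 1 (c.2 - 1),
            ((∑ k ∈ Finset.Icc c.1 (conj f L j), x k) +
              ∑ l ∈ Finset.Icc (j + 1) (c.2 - 1), y l))) *
        (∏ c' ∈ (outerCorners f L).erase c,
          (vvF x y (c.1-1) (c.2-1) - vvF x y (c'.1-1) (c'.2-1)))
      = (∏ p ∈ cells f L,
          ((∑ k ∈ Finset.Icc p.1 (conj f L p.2), x k) + ∑ l ∈ Finset.Icc p.2 (f p.1), y l)) *
        (∏ t ∈ (Icc 1 L).filter (fun i => f (i+1) < f i),
          (vvF x y (c.1-1) (c.2-1) - vvF x y t (f t))) := by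
    intro c hc
    have hr1 := corner_r_pos hc
    have hs := corner_s hc
    have hconjc := conj_corner hf hc
    have hsplit := cells_split (M := F) (fun p =>
      (∑ k ∈ Finset.Icc p.1 (conj f L p.2), x k) + ∑ l ∈ Finset.Icc p.2 (f p.1), y l) hf hc
    simp only at hsplit
    have hE := congrArg (Polynomial.eval (vvF x y (c.1-1) (c.2-1)))
      (master_poly (fun a b => vvF x y a b) hf hc)
    simp only [Polynomial.eval_mul, Polynomial.eval_prod, Polynomial.eval_sub,
      Polynomial.eval_X, Polynomial.eval_C] at hE
    -- translations
    have pA : ∏ i ∈ Finset.Icc 1 (c.1 - 1),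
        ((∑ k ∈ Finset.Icc (i + 1) (c.1 - 1), x k) + ∑ l ∈ Finset.Icc c.2 (f i), y l)
        = ∏ i ∈ Finset.Icc 1 (c.1 - 1),
            (vvF x y (c.1-1) (c.2-1) - vvF x y i (f i)) := by
      refine Finset.prod_congr rfl fun i hi => ?_
      rw [mem_Icc] at hi
      have hc2 : c.2 ≤ f (c.1-1) := by
        rcases corner_cond hc with h | h
        · omega
        · exact h
      have hfi : c.2 ≤ f i := le_trans hc2 (fmono hf i (c.1-1) (by omega) (by omega))
      have h1 : ∑ k ∈ Finset.Icc (i+1) (c.1-1), x k = uF x (c.1-1) - uF x i := by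
        have := sum_Icc_eq x (show 1 ≤ i+1 by omega) (show i+1 ≤ (c.1-1)+1 by omega)
        simpa [Nat.add_sub_cancel] using this
      have h2 : ∑ l ∈ Finset.Icc c.2 (f i), y l = uF y (f i) - uF y (c.2-1) :=
        sum_Icc_eq y (by omega) (by omega)
      rw [h1, h2, vvF, vvF]
      ring
    have pB : ∏ j ∈ Finset.Icc 1 (c.2 - 1),
        ((∑ k ∈ Finset.Icc c.1 (conj f L j), x k) + ∑ l ∈ Finset.Icc (j + 1) (c.2 - 1), y l)
        = ∏ j ∈ Finset.Icc 1 (c.2 - 1),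
            (vvF x y (conj f L j) j - vvF x y (c.1-1) (c.2-1)) := by
      refine Finset.prod_congr rfl fun j hj => ?_
      rw [mem_Icc] at hj
      have hconj_ge : c.1 ≤ conj f L j := le_conj hf (by omega) (by omega) (by omega)
      have h1 : ∑ k ∈ Finset.Icc c.1 (conj f L j), x k = uF x (conj f L j) - uF x (c.1-1) :=
        sum_Icc_eq x (by omega) (by omega)
      have h2 : ∑ l ∈ Finset.Icc (j+1) (c.2-1), y l = uF y (c.2-1) - uF y j := by
        have := sum_Icc_eq y (show 1 ≤ j+1 by omega) (show j+1 ≤ (c.2-1)+1 by omega)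
        simpa [Nat.add_sub_cancel] using this
      rw [h1, h2, vvF, vvF]
      ring
    have pTi : ∏ i ∈ Finset.Icc 1 (c.1-1),
        ((∑ k ∈ Finset.Icc i (conj f L c.2), x k) + ∑ l ∈ Finset.Icc c.2 (f i), y l)
        = ∏ i ∈ Finset.Icc 1 (c.1-1),
            (vvF x y (c.1-1) (c.2-1) - vvF x y (i-1) (f i)) := by
      refine Finset.prod_congr rfl fun i hi => ?_
      rw [mem_Icc] at hi
      have hc2 : c.2 ≤ f (c.1-1) := by
        rcases corner_cond hc with h | h
        · omega
        · exact h
      have hfi : c.2 ≤ f i := le_trans hc2 (fmono hf i (c.1-1) (by omega) (by omega))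
      have h1 : ∑ k ∈ Finset.Icc i (conj f L c.2), x k = uF x (c.1-1) - uF x (i-1) := by
        rw [hconjc]
        exact sum_Icc_eq x (by omega) (by omega)
      have h2 : ∑ l ∈ Finset.Icc c.2 (f i), y l = uF y (f i) - uF y (c.2-1) :=
        sum_Icc_eq y (by omega) (by omega)
      rw [h1, h2, vvF, vvF]
      ring
    have pTj : ∏ j ∈ Finset.Icc 1 (c.2-1),
        ((∑ k ∈ Finset.Icc c.1 (conj f L j), x k) + ∑ l ∈ Finset.Icc j (f c.1), y l)
        = ∏ j ∈ Finset.Icc 1 (c.2-1),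
            (vvF x y (conj f L j) (j-1) - vvF x y (c.1-1) (c.2-1)) := by
      refine Finset.prod_congr rfl fun j hj => ?_
      rw [mem_Icc] at hj
      have hconj_ge : c.1 ≤ conj f L j := le_conj hf (by omega) (by omega) (by omega)
      have h1 : ∑ k ∈ Finset.Icc c.1 (conj f L j), x k = uF x (conj f L j) - uF x (c.1-1) :=
        sum_Icc_eq x (by omega) (by omega)
      have h2 : ∑ l ∈ Finset.Icc j (f c.1), y l = uF y (f c.1) - uF y (j-1) :=
        sum_Icc_eq y (by omega) (by omega)
      have h3 : f c.1 = c.2 - 1 := by omega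
      rw [h1, h2, h3, vvF, vvF]
      ring
    rw [hsplit, pA, pB, pTi, pTj]
    have e2 : ∏ j ∈ Finset.Icc 1 (c.2-1),
        (vvF x y (conj f L j) (j-1) - vvF x y (c.1-1) (c.2-1))
        = (-1)^(Finset.Icc 1 (c.2-1)).card *
          ∏ j ∈ Finset.Icc 1 (c.2-1),
            (vvF x y (c.1-1) (c.2-1) - vvF x y (conj f L j) (j-1)) := by
      rw [← Finset.prod_const, ← Finset.prod_mul_distrib]
      refine Finset.prod_congr rfl fun j _ => ?_
      ring
    have e4 : ∏ j ∈ Finset.Icc 1 (c.2-1),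
        (vvF x y (conj f L j) j - vvF x y (c.1-1) (c.2-1))
        = (-1)^(Finset.Icc 1 (c.2-1)).card *
          ∏ j ∈ Finset.Icc 1 (c.2-1),
            (vvF x y (c.1-1) (c.2-1) - vvF x y (conj f L j) j) := by
      rw [← Finset.prod_const, ← Finset.prod_mul_distrib]
      refine Finset.prod_congr rfl fun j _ => ?_
      ring
    rw [e2, e4]
    linear_combination (-((-1)^(Finset.Icc 1 (c.2-1)).card) *
      (∏ p ∈ (cells f L).filter (fun p => p.1 ≠ c.1 ∧ p.2 ≠ c.2),
          ((∑ k ∈ Finset.Icc p.1 (conj f L p.2), x k) + ∑ l ∈ Finset.Icc p.2 (f p.1), y l))) * hE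
  -- final assembly
  have hcard := card_oc hf
  have hinj := D_injOn' x y hf hvv
  have hlag := lagrange_sum_eq_one (outerCorners f L)
    (fun c' : ℕ × ℕ => vvF x y (c'.1-1) (c'.2-1)) hinj
    ((Icc 1 L).filter (fun i => f (i+1) < f i)) (fun t => vvF x y t (f t)) hcard
  have hne : ∀ c ∈ outerCorners f L,
      (∏ c' ∈ (outerCorners f L).erase c,
        (vvF x y (c.1-1) (c.2-1) - vvF x y (c'.1-1) (c'.2-1))) ≠ 0 := by
    intro c hc
    rw [Finset.prod_ne_zero_iff]
    intro c' hc'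
    rw [mem_erase] at hc'
    refine sub_ne_zero.mpr ?_
    intro h
    exact hc'.1 (hinj hc'.2 hc h.symm)
  symm
  calc ∑ c ∈ outerCorners f L,
        (∏ p ∈ (cells f L).filter (fun p => p.1 ≠ c.1 ∧ p.2 ≠ c.2),
            ((∑ k ∈ Finset.Icc p.1 (conj f L p.2), x k) + ∑ l ∈ Finset.Icc p.2 (f p.1), y l)) *
        (∏ i ∈ Finset.Icc 1 (c.1 - 1),
            ((∑ k ∈ Finset.Icc (i + 1) (c.1 - 1), x k) + ∑ l ∈ Finset.Icc c.2 (f i), y l)) *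
        (∏ j ∈ Finset.Icc 1 (c.2 - 1),
            ((∑ k ∈ Finset.Icc c.1 (conj f L j), x k) +
              ∑ l ∈ Finset.Icc (j + 1) (c.2 - 1), y l))
      = ∑ c ∈ outerCorners f L,
          (∏ p ∈ cells f L,
            ((∑ k ∈ Finset.Icc p.1 (conj f L p.2), x k) + ∑ l ∈ Finset.Icc p.2 (f p.1), y l)) *
          ((∏ t ∈ (Icc 1 L).filter (fun i => f (i+1) < f i),
            (vvF x y (c.1-1) (c.2-1) - vvF x y t (f t))) /
           (∏ c' ∈ (outerCorners f L).erase c,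
            (vvF x y (c.1-1) (c.2-1) - vvF x y (c'.1-1) (c'.2-1)))) := by
        refine Finset.sum_congr rfl fun c hc => ?_
        rw [← mul_div_assoc, eq_div_iff (hne c hc)]
        exact star c hc
    _ = (∏ p ∈ cells f L,
          ((∑ k ∈ Finset.Icc p.1 (conj f L p.2), x k) + ∑ l ∈ Finset.Icc p.2 (f p.1), y l)) *
        ∑ c ∈ outerCorners f L,
          ((∏ t ∈ (Icc 1 L).filter (fun i => f (i+1) < f i),
            (vvF x y (c.1-1) (c.2-1) - vvF x y t (f t))) /
           (∏ c' ∈ (outerCorners f L).erase c,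
            (vvF x y (c.1-1) (c.2-1) - vvF x y (c'.1-1) (c'.2-1)))) := by
        rw [Finset.mul_sum]
    _ = ∏ p ∈ cells f L,
          ((∑ k ∈ Finset.Icc p.1 (conj f L p.2), x k) + ∑ l ∈ Finset.Icc p.2 (f p.1), y l) := by
        rw [hlag, mul_one]

end CWBRaux

section CWBRtransfer
open CWBRaux MvPolynomial

abbrev CWBRA : Type := MvPolynomial (ℕ ⊕ ℕ) ℤ
abbrev CWBRK : Type := FractionRing CWBRA

noncomputable def cwbrPhi : CWBRA →+* CWBRK := algebraMap CWBRA CWBRK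

lemma cwbr_hvv :
    ∀ a a' b b' : ℕ, a ≤ a' → b' ≤ b → (a < a' ∨ b' < b) →
      vvF (fun i => cwbrPhi (X (Sum.inl i))) (fun j => cwbrPhi (X (Sum.inr j))) a' b'
      ≠ vvF (fun i => cwbrPhi (X (Sum.inl i))) (fun j => cwbrPhi (X (Sum.inr j))) a b := by
  intro a a' b b' haa hbb hor heq
  have hinj : Function.Injective cwbrPhi := IsFractionRing.injective CWBRA CWBRK
  simp only [vvF, uF, ← map_sum, ← map_sub] at heq
  have heq2 := hinj heq
  have := congrArg (MvPolynomial.eval (fun _ => (1:ℤ))) heq2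
  simp only [map_sub, map_sum, MvPolynomial.eval_X, Finset.sum_const, Nat.card_Ioc,
    smul_eq_mul, mul_one, Nat.sub_zero] at this
  simp only [nsmul_eq_mul, mul_one] at this
  omega

lemma cwbr_A (f : ℕ → ℕ) (L : ℕ) (hf : IsPartitionFun f L) :
    ∏ p ∈ cells f L,
        ((∑ k ∈ Finset.Icc p.1 (conj f L p.2), (X (Sum.inl k) : CWBRA)) +
          ∑ l ∈ Finset.Icc p.2 (f p.1), X (Sum.inr l)) =
      ∑ c ∈ outerCorners f L,
        (∏ p ∈ (cells f L).filter (fun p => p.1 ≠ c.1 ∧ p.2 ≠ c.2),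
            ((∑ k ∈ Finset.Icc p.1 (conj f L p.2), (X (Sum.inl k) : CWBRA)) +
              ∑ l ∈ Finset.Icc p.2 (f p.1), X (Sum.inr l))) *
        (∏ i ∈ Finset.Icc 1 (c.1 - 1),
            ((∑ k ∈ Finset.Icc (i + 1) (c.1 - 1), (X (Sum.inl k) : CWBRA)) +
              ∑ l ∈ Finset.Icc c.2 (f i), X (Sum.inr l))) *
        (∏ j ∈ Finset.Icc 1 (c.2 - 1),
            ((∑ k ∈ Finset.Icc c.1 (conj f L j), (X (Sum.inl k) : CWBRA)) +
              ∑ l ∈ Finset.Icc (j + 1) (c.2 - 1), X (Sum.inr l))) := by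
  have hinj : Function.Injective cwbrPhi := IsFractionRing.injective CWBRA CWBRK
  apply hinj
  have hmain := cweq_main (f := f) (L := L)
    (fun i => cwbrPhi (X (Sum.inl i))) (fun j => cwbrPhi (X (Sum.inr j))) hf cwbr_hvv
  simpa only [map_prod, map_sum, map_add, map_mul] using hmain.symm ▸ rfl

end CWBRtransfer






/-- **Complementary weighted branching rule (CWBR)**, as an identity valid for commuting
variables `x_1,…,x_{ℓ(λ)}, y_1,…,y_{λ_1}` in any commutative ring. -/
theorem cwbr {R : Type*} [CommRing R] (f : ℕ → ℕ) (L : ℕ) (hf : IsPartitionFun f L)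
    (x y : ℕ → R) :
    ∏ p ∈ cells f L,
        ((∑ k ∈ Finset.Icc p.1 (conj f L p.2), x k) + ∑ l ∈ Finset.Icc p.2 (f p.1), y l) =
      ∑ c ∈ outerCorners f L,
        (∏ p ∈ (cells f L).filter (fun p => p.1 ≠ c.1 ∧ p.2 ≠ c.2),
            ((∑ k ∈ Finset.Icc p.1 (conj f L p.2), x k) + ∑ l ∈ Finset.Icc p.2 (f p.1), y l)) *
        (∏ i ∈ Finset.Icc 1 (c.1 - 1),
            ((∑ k ∈ Finset.Icc (i + 1) (c.1 - 1), x k) + ∑ l ∈ Finset.Icc c.2 (f i), y l)) *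
        (∏ j ∈ Finset.Icc 1 (c.2 - 1),
            ((∑ k ∈ Finset.Icc c.1 (conj f L j), x k) + ∑ l ∈ Finset.Icc (j + 1) (c.2 - 1), y l)) := by
  have hA := cwbr_A f L hf
  have h2 := congrArg (MvPolynomial.eval₂Hom (Int.castRingHom R) (Sum.elim x y)) hA
  simpa only [map_prod, map_sum, map_add, map_mul, MvPolynomial.eval₂Hom_X',
    Sum.elim_inl, Sum.elim_inr] using h2
end
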